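/- arXiv:2010.05118 — 9 statements merged into one kernel-verified Lean document; each statement's English description precedes it below -/
import Mathlib

section
/- Let ε>0, c∈ℝ, and let a,b:[0,ε]→ℝ be continuous with a(0)>0. Suppose x:[0,ε]→ℝ is continuous, continuously differentiable on (0,ε], satisfies x'(t) = -a(t)·(x(t)-c)/t + b(t) for all t∈(0,ε], and x(0)=c. Then x is continuously differentiable on all of [0,ε], with x'(0) = b(0)/(1+a(0)). -/
/-!
With `L = b 0 / (1 + a 0)`, the function `u t = x t - c - L t` solves
`u' = -a u / t + g` with `g → 0` at `0⁺`. Since `a ≥ 0` near `0`, the lines `± δ t` are barriers: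
wherever `u` exceeds `δ t` its slope is below `δ`, so `|u t| ≤ δ t` near `0`. Hence
`(x t - c) / t → L`, which is the right derivative of `x` at `0`, and by the equation `x' → L` too.
-/

open Set Filter Topology

theorem nonpos_of_hasDerivAt_neg_of_pos {w w' : ℝ → ℝ} {a b : ℝ}
    (hw : ContinuousOn w (Icc a b)) (ha : w a ≤ 0)
    (hderiv : ∀ s ∈ Ioo a b, HasDerivAt w (w' s) s)
    (hneg : ∀ s ∈ Ioo a b, 0 < w s → w' s < 0) :
    ∀ t ∈ Icc a b, w t ≤ 0 := by
  intro t ht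
  by_contra! hpos
  -- `m` is the last zero-or-below point before `t`; on `(m, t]` the function is positive,
  -- yet the mean value theorem gives a positive slope there.
  have hS : IsCompact (Icc a t ∩ w ⁻¹' Iic 0) :=
    isCompact_Icc.of_isClosed_subset
      ((hw.mono (Icc_subset_Icc_right ht.2)).preimage_isClosed_of_isClosed isClosed_Icc
        isClosed_Iic) inter_subset_left
  obtain ⟨m, ⟨⟨ham, hmt⟩, hwm⟩, hm⟩ := hS.exists_isGreatest ⟨a, ⟨left_mem_Icc.2 ht.1, ha⟩⟩
  have hmt : m < t := hmt.lt_of_ne (by rintro rfl; exact hwm.not_gt hpos)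
  have hpos_after : ∀ s ∈ Ioo m t, 0 < w s := fun s hs ↦ by
    by_contra! hws
    exact hs.1.not_ge (hm ⟨⟨ham.trans hs.1.le, hs.2.le⟩, hws⟩)
  have hsub : Ioo m t ⊆ Ioo a b := Ioo_subset_Ioo ham ht.2
  obtain ⟨ξ, hξ, hslope⟩ := exists_hasDerivAt_eq_slope w w' hmt
    (hw.mono (Icc_subset_Icc ham ht.2)) fun s hs ↦ hderiv s (hsub hs)
  have hξ_pos : 0 < w' ξ := hslope ▸ div_pos (by simp at hwm; linarith) (sub_pos.2 hmt)
  exact (hneg ξ (hsub hξ) (hpos_after ξ hξ)).not_gt hξ_pos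

theorem eventually_le_mul_of_singular_ode {u a g : ℝ → ℝ} {r δ : ℝ} (hr : 0 < r) (hδ : 0 ≤ δ)
    (hu : ContinuousOn u (Icc 0 r)) (hu0 : u 0 = 0)
    (hderiv : ∀ t ∈ Ioo 0 r, HasDerivAt u (-a t * u t / t + g t) t)
    (ha : ∀ᶠ t in 𝓝[>] 0, 0 ≤ a t) (hg : ∀ᶠ t in 𝓝[>] 0, g t < δ) :
    ∀ᶠ t in 𝓝[>] 0, u t ≤ δ * t := by
  obtain ⟨r', hr', hr'_sub⟩ := mem_nhdsGT_iff_exists_Ioo_subset.1 (ha.and hg)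
  set ρ := min r r'
  have hρ : 0 < ρ := lt_min hr hr'
  have hbarrier := nonpos_of_hasDerivAt_neg_of_pos (w := fun t ↦ u t - δ * t)
    (w' := fun t ↦ -a t * u t / t + g t - δ) (a := 0) (b := ρ)
    ((hu.mono (Icc_subset_Icc_right (min_le_left _ _))).sub
      (continuousOn_const.mul continuousOn_id))
    (by simp [hu0])
    (fun s hs ↦ (hderiv s ⟨hs.1, hs.2.trans_le (min_le_left _ _)⟩).sub
      ((hasDerivAt_id s).const_mul δ |>.congr_deriv (mul_one δ)))
    (fun s hs hws ↦ by
      obtain ⟨has, hgs⟩ := hr'_sub ⟨hs.1, hs.2.trans_le (min_le_right _ _)⟩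
      have : a s * δ ≤ a s * u s / s := by
        rw [mul_div_assoc]
        exact mul_le_mul_of_nonneg_left ((le_div_iff₀ hs.1).2 (by linarith)) has
      rw [neg_mul, neg_div]
      linarith [mul_nonneg has hδ])
  filter_upwards [Ioo_mem_nhdsGT hρ] with t ht
  linarith [hbarrier t (Ioo_subset_Icc_self ht)]

theorem tendsto_div_of_singular_ode {u a g : ℝ → ℝ} {r : ℝ} (hr : 0 < r)
    (hu : ContinuousOn u (Icc 0 r)) (hu0 : u 0 = 0)
    (hderiv : ∀ t ∈ Ioo 0 r, HasDerivAt u (-a t * u t / t + g t) t)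
    (ha : ∀ᶠ t in 𝓝[>] 0, 0 ≤ a t) (hg : Tendsto g (𝓝[>] 0) (𝓝 0)) :
    Tendsto (fun t ↦ u t / t) (𝓝[>] 0) (𝓝 0) := by
  refine tendsto_order.2 ⟨fun δ hδ ↦ ?_, fun δ hδ ↦ ?_⟩
  · have hlower := eventually_le_mul_of_singular_ode (u := -u) (g := -g) (δ := -δ / 2) hr
      (by linarith) hu.neg (by simp [hu0])
      (fun t ht ↦ (hderiv t ht).neg.congr_deriv (by simp; ring)) ha
      (hg.neg.eventually (gt_mem_nhds (by simp; linarith)))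
    filter_upwards [hlower, self_mem_nhdsWithin] with t ht (htpos : 0 < t)
    rw [lt_div_iff₀ htpos]
    simp only [Pi.neg_apply] at ht
    nlinarith
  · have hupper := eventually_le_mul_of_singular_ode (δ := δ / 2) hr (by linarith) hu hu0 hderiv ha
      (hg.eventually (gt_mem_nhds (by linarith)))
    filter_upwards [hupper, self_mem_nhdsWithin] with t ht (htpos : 0 < t)
    rw [div_lt_iff₀ htpos]
    nlinarith

theorem tendsto_slope_of_singular_ode {x a b : ℝ → ℝ} {ε c α β : ℝ} (hε : 0 < ε)
    (hx : ContinuousOn x (Icc 0 ε)) (hx0 : x 0 = c)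
    (hderiv : ∀ t ∈ Ioo 0 ε, HasDerivAt x (-a t * (x t - c) / t + b t) t)
    (ha : Tendsto a (𝓝[>] 0) (𝓝 α)) (hb : Tendsto b (𝓝[>] 0) (𝓝 β)) (hα : 0 < α) :
    Tendsto (fun t ↦ (x t - c) / t) (𝓝[>] 0) (𝓝 (β / (1 + α))) := by
  set L := β / (1 + α)
  have hL : β = (1 + α) * L := by rw [mul_div_cancel₀ β (by positivity)]
  -- `u = x - c - L t` solves the same singular equation with a forcing term tending to `0`.
  have hu := tendsto_div_of_singular_ode (u := fun t ↦ x t - c - L * t)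
    (g := fun t ↦ b t - β - (a t - α) * L) hε
    ((hx.sub continuousOn_const).sub (continuousOn_const.mul continuousOn_id)) (by simp [hx0])
    (fun t ht ↦ ((hderiv t ht).sub_const c).sub ((hasDerivAt_id t).const_mul L)
      |>.congr_deriv (by field_simp [ht.1.ne']; rw [hL]; ring))
    (ha.eventually (eventually_ge_nhds hα))
    (by simpa using (hb.sub_const β).sub ((ha.sub_const α).mul_const L))
  refine (zero_add L ▸ hu.add_const L).congr' ?_
  filter_upwards [self_mem_nhdsWithin] with t (ht : 0 < t)
  field_simp
  ring

/-- Singular ODE regularity at t = 0: if x'(t) = -a(t)(x(t)-c)/t + b(t) on (0,ε],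
x continuous on [0,ε] with x(0) = c, a(0) > 0, then x is C¹ on [0,ε] with
x'(0) = b(0)/(1+a(0)). -/
theorem stmt0 (ε c : ℝ) (hε : 0 < ε) (a b x x' : ℝ → ℝ)
    (ha : ContinuousOn a (Icc 0 ε)) (hb : ContinuousOn b (Icc 0 ε))
    (ha0 : 0 < a 0)
    (hx : ContinuousOn x (Icc 0 ε))
    (hderiv : ∀ t ∈ Ioc (0:ℝ) ε, HasDerivAt x (x' t) t)
    (hx'cont : ContinuousOn x' (Ioc 0 ε))
    (hode : ∀ t ∈ Ioc (0:ℝ) ε, x' t = -a t * (x t - c) / t + b t)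
    (hx0 : x 0 = c) :
    ∃ X' : ℝ → ℝ, ContinuousOn X' (Icc 0 ε) ∧
      (∀ t ∈ Icc (0:ℝ) ε, HasDerivWithinAt x (X' t) (Icc 0 ε) t) ∧
      (∀ t ∈ Ioc (0:ℝ) ε, X' t = x' t) ∧
      X' 0 = b 0 / (1 + a 0) := by
  set L := b 0 / (1 + a 0)
  have hright : ∀ f : ℝ → ℝ, ContinuousOn f (Icc 0 ε) → Tendsto f (𝓝[>] 0) (𝓝 (f 0)) := fun f hf ↦
    ((continuousWithinAt_Icc_iff_Ici hε).1 (hf 0 ⟨le_rfl, hε.le⟩)).mono Ioi_subset_Ici_self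
  have hslope : Tendsto (fun t ↦ (x t - c) / t) (𝓝[>] 0) (𝓝 L) :=
    tendsto_slope_of_singular_ode hε hx hx0
      (fun t ht ↦ hode t (Ioo_subset_Ioc_self ht) ▸ hderiv t (Ioo_subset_Ioc_self ht))
      (hright a ha) (hright b hb) ha0
  have hx'lim : Tendsto x' (𝓝[>] 0) (𝓝 L) := by
    have hL : -a 0 * L + b 0 = L := by simp only [L]; field_simp; ring
    refine hL ▸ (((hright a ha).neg.mul hslope).add (hright b hb)).congr' ?_
    filter_upwards [Ioo_mem_nhdsGT hε] with t ht
    rw [hode t (Ioo_subset_Ioc_self ht), mul_div_assoc]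
  have hnhds : 𝓝[Icc 0 ε \ {0}] (0 : ℝ) = 𝓝[>] 0 := by
    rw [Icc_sdiff_left, nhdsWithin_Ioc_eq_nhdsGT hε]
  refine ⟨Function.update x' 0 L, ?_, fun t ht ↦ ?_, fun t ht ↦ ?_, by simp⟩
  · rw [continuousOn_update_iff, hnhds, Icc_sdiff_left]
    exact ⟨hx'cont, fun _ ↦ hx'lim⟩
  · rcases ht.1.eq_or_lt with rfl | ht0
    · rw [Function.update_self, hasDerivWithinAt_iff_tendsto_slope, hnhds]
      refine hslope.congr' ?_
      filter_upwards with t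
      simp [slope_def_field, hx0]
    · rw [Function.update_of_ne ht0.ne']
      exact (hderiv t ⟨ht0, ht.2⟩).hasDerivWithinAt
  · exact Function.update_of_ne ht.1.ne' _ _
end

section
/- Let ε>0, c∈ℝ, and let a,b:[1-ε,1]→ℝ be continuous with a(1)>0. Suppose x:[1-ε,1]→ℝ is continuous, continuously differentiable on [1-ε,1), satisfies x'(t) = a(t)·(x(t)-c)/(1-t) + b(t) for all t∈[1-ε,1), and x(1)=c. Then x is continuously differentiable on [1-ε,1] with x'(1) = b(1)/(1+a(1)). -/
open Set Topology Filter Function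

/-!
Put `L = b(1) / (1 + a(1))`. Then `h(t) = x(t) - c + L (1 - t)` vanishes at `1` and solves
`h' = a h / (1 - t) + g` with `g = b - (1 + a) L → 0`. Near `1` we have `a > a(1)/2` and `g` small,
so wherever `h(t) / (1 - t) > δ` the function `h` is increasing; a fence argument then shows that
`h(t₀) > δ (1 - t₀)` would force `0 = h(1) ≥ h(t₀) > 0`, and symmetrically from below. Hence
`(x(t) - c) / (1 - t) → -L`, which is the left derivative `L` of `x` at `1`, and by the equation
`x'(t) → a(1) (-L) + b(1) = L`, so `x'` extends continuously to `1`.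
-/

theorem le_mul_one_sub_of_deriv_pos {h h' : ℝ → ℝ} {t₀ δ : ℝ} (hδ : 0 ≤ δ) (ht₀ : t₀ ≤ 1)
    (hcont : ContinuousOn h (Icc t₀ 1)) (hderiv : ∀ s ∈ Ico t₀ 1, HasDerivAt h (h' s) s)
    (h1 : h 1 ≤ 0) (hpos : ∀ s ∈ Ico t₀ 1, δ < h s / (1 - s) → 0 < h' s) :
    h t₀ ≤ δ * (1 - t₀) := by
  by_contra! hlt
  have hmono : ∀ s ∈ Icc t₀ 1, h t₀ ≤ h s :=
    image_le_of_deriv_right_lt_deriv_boundary' continuousOn_const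
      (fun _ _ => hasDerivWithinAt_const _ _ _) le_rfl hcont
      (fun s hs => (hderiv s hs).hasDerivWithinAt) fun s hs heq =>
        hpos s hs <| (lt_div_iff₀ (sub_pos.2 hs.2)).2 <| by
          nlinarith [mul_le_mul_of_nonneg_left hs.1 hδ]
  nlinarith [hmono 1 ⟨ht₀, le_rfl⟩]

theorem abs_le_mul_one_sub_of_deriv {h h' : ℝ → ℝ} {t₀ δ : ℝ} (hδ : 0 ≤ δ) (ht₀ : t₀ ≤ 1)
    (hcont : ContinuousOn h (Icc t₀ 1)) (hderiv : ∀ s ∈ Ico t₀ 1, HasDerivAt h (h' s) s)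
    (h1 : h 1 = 0) (hpos : ∀ s ∈ Ico t₀ 1, δ < h s / (1 - s) → 0 < h' s)
    (hneg : ∀ s ∈ Ico t₀ 1, h s / (1 - s) < -δ → h' s < 0) :
    |h t₀| ≤ δ * (1 - t₀) := by
  refine abs_le.2 ⟨?_, le_mul_one_sub_of_deriv_pos hδ ht₀ hcont hderiv h1.le hpos⟩
  have := le_mul_one_sub_of_deriv_pos (h := -h) (h' := -h') hδ ht₀ hcont.neg
    (fun s hs => (hderiv s hs).neg) (by simp [h1])
    (fun s hs hlt => neg_pos.2 (hneg s hs (by rw [Pi.neg_apply, neg_div] at hlt; linarith)))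
  simp only [Pi.neg_apply] at this
  linarith

theorem tendsto_div_one_sub_nhds_zero {h a g : ℝ → ℝ} {t₀ κ : ℝ} (ht₀ : t₀ < 1)
    (hκ : 0 < κ) (hcont : ContinuousOn h (Icc t₀ 1)) (h1 : h 1 = 0)
    (hderiv : ∀ s ∈ Ico t₀ 1, HasDerivAt h (a s * h s / (1 - s) + g s) s)
    (ha : ∀ᶠ s in 𝓝[<] 1, κ < a s) (hg : Tendsto g (𝓝[<] 1) (𝓝 0)) :
    Tendsto (fun s => h s / (1 - s)) (𝓝[<] 1) (𝓝 0) := by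
  rw [Metric.tendsto_nhds]
  intro δ hδ
  have hgδ : ∀ᶠ s in 𝓝[<] 1, |g s| < κ * (δ / 2) := by
    simpa [Real.dist_eq] using Metric.tendsto_nhds.1 hg _ (by positivity)
  obtain ⟨l, hl, hsub⟩ := mem_nhdsLT_iff_exists_Ioo_subset.1 (ha.and hgδ)
  filter_upwards [Ioo_mem_nhdsLT (max_lt ht₀ hl)] with t ht
  obtain ⟨ht₀t, hlt⟩ := max_lt_iff.1 ht.1
  have h1t : 0 < 1 - t := sub_pos.2 ht.2
  have hcoef : ∀ s ∈ Ico t 1, κ < a s ∧ |g s| < κ * (δ / 2) := fun s hs =>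
    hsub ⟨hlt.trans_le hs.1, hs.2⟩
  have hbound : |h t| ≤ δ / 2 * (1 - t) := by
    refine abs_le_mul_one_sub_of_deriv (by positivity) ht.2.le
      (hcont.mono (Icc_subset_Icc_left ht₀t.le))
      (fun s hs => hderiv s ⟨ht₀t.le.trans hs.1, hs.2⟩) h1
      (fun s hs hq => ?_) (fun s hs hq => ?_) <;>
    · obtain ⟨has, hgs⟩ := hcoef s hs
      rw [mul_div_assoc]
      nlinarith [abs_lt.1 hgs]
  rw [Real.dist_eq, sub_zero, abs_div, abs_of_pos h1t, div_lt_iff₀ h1t]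
  nlinarith

theorem tendsto_div_one_sub_of_singular_ode {x a b : ℝ → ℝ} {t₀ c α β : ℝ} (ht₀ : t₀ < 1)
    (hα : 0 < α) (ha : Tendsto a (𝓝[<] 1) (𝓝 α)) (hb : Tendsto b (𝓝[<] 1) (𝓝 β))
    (hx : ContinuousOn x (Icc t₀ 1)) (hx1 : x 1 = c)
    (hderiv : ∀ t ∈ Ico t₀ 1, HasDerivAt x (a t * (x t - c) / (1 - t) + b t) t) :
    Tendsto (fun t => (x t - c) / (1 - t)) (𝓝[<] 1) (𝓝 (-(β / (1 + α)))) := by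
  set L := β / (1 + α)
  have hL : (1 + α) * L = β := mul_div_cancel₀ _ (by positivity)
  set h : ℝ → ℝ := fun t => x t - c + L * (1 - t)
  have hh : Tendsto (fun t => h t / (1 - t)) (𝓝[<] 1) (𝓝 0) := by
    refine tendsto_div_one_sub_nhds_zero (g := fun t => b t - (1 + a t) * L) ht₀
      (half_pos hα) (by fun_prop) (by simp [h, hx1]) (fun t ht => ?_)
      (ha.eventually (lt_mem_nhds (half_lt_self hα))) ?_
    · have h1t : 1 - t ≠ 0 := (sub_pos.2 ht.2).ne'
      refine (((hderiv t ht).sub_const c).add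
        (((hasDerivAt_id' t).const_sub 1).const_mul L)).congr_deriv ?_
      simp only [h]
      field_simp
      ring
    · simpa [hL] using hb.sub ((tendsto_const_nhds (x := (1 : ℝ)) |>.add ha).mul_const L)
  refine (zero_sub L ▸ hh.sub_const L).congr' ?_
  filter_upwards [self_mem_nhdsWithin] with t ht
  have h1t : 1 - t ≠ 0 := (sub_pos.2 ht).ne'
  simp only [h]
  field_simp
  ring

theorem hasDerivWithinAt_Icc_of_tendsto_div_one_sub {x : ℝ → ℝ} {t₀ L : ℝ} (ht₀ : t₀ < 1)
    (hq : Tendsto (fun t => (x t - x 1) / (1 - t)) (𝓝[<] 1) (𝓝 (-L))) :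
    HasDerivWithinAt x L (Icc t₀ 1) 1 := by
  rw [hasDerivWithinAt_iff_tendsto_slope, Icc_sdiff_right, nhdsWithin_Ico_eq_nhdsLT ht₀,
    ← neg_neg L]
  refine hq.neg.congr' ?_
  filter_upwards [self_mem_nhdsWithin] with t ht
  rw [slope_def_field, ← neg_sub 1 t, div_neg]

/-- Singular ODE regularity at t = 1: if x'(t) = a(t)(x(t)-c)/(1-t) + b(t) on [1-ε,1),
x continuous on [1-ε,1] with x(1) = c, a(1) > 0, then x is C¹ on [1-ε,1] with
x'(1) = b(1)/(1+a(1)). -/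
theorem stmt1 (ε c : ℝ) (hε : 0 < ε) (a b x x' : ℝ → ℝ)
    (ha : ContinuousOn a (Icc (1 - ε) 1)) (hb : ContinuousOn b (Icc (1 - ε) 1))
    (ha1 : 0 < a 1)
    (hx : ContinuousOn x (Icc (1 - ε) 1))
    (hderiv : ∀ t ∈ Ico (1 - ε) (1:ℝ), HasDerivAt x (x' t) t)
    (hx'cont : ContinuousOn x' (Ico (1 - ε) 1))
    (hode : ∀ t ∈ Ico (1 - ε) (1:ℝ), x' t = a t * (x t - c) / (1 - t) + b t)
    (hx1 : x 1 = c) :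
    ∃ X' : ℝ → ℝ, ContinuousOn X' (Icc (1 - ε) 1) ∧
      (∀ t ∈ Icc (1 - ε) (1:ℝ), HasDerivWithinAt x (X' t) (Icc (1 - ε) 1) t) ∧
      (∀ t ∈ Ico (1 - ε) (1:ℝ), X' t = x' t) ∧
      X' 1 = b 1 / (1 + a 1) := by
  set L := b 1 / (1 + a 1)
  have hlt : 1 - ε < 1 := by linarith
  have hnhds : 𝓝[Icc (1 - ε) 1 \ {1}] (1 : ℝ) = 𝓝[<] 1 := by
    rw [Icc_sdiff_right, nhdsWithin_Ico_eq_nhdsLT hlt]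
  have hlim : ∀ {f : ℝ → ℝ}, ContinuousOn f (Icc (1 - ε) 1) → Tendsto f (𝓝[<] 1) (𝓝 (f 1)) :=
    fun hf => hnhds ▸ (hf 1 ⟨hlt.le, le_rfl⟩).mono sdiff_subset
  have hq : Tendsto (fun t => (x t - c) / (1 - t)) (𝓝[<] 1) (𝓝 (-L)) :=
    tendsto_div_one_sub_of_singular_ode hlt ha1 (hlim ha) (hlim hb) hx hx1
      fun t ht => hode t ht ▸ hderiv t ht
  have hx'1 : Tendsto x' (𝓝[<] 1) (𝓝 L) := by
    have hL : a 1 * -L + b 1 = L := by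
      have : 1 + a 1 ≠ 0 := by positivity
      simp only [L]
      field_simp
      ring
    refine hL ▸ ((hlim ha).mul hq).add (hlim hb) |>.congr' ?_
    filter_upwards [Ioo_mem_nhdsLT hlt] with t ht
    rw [hode t (Ioo_subset_Ico_self ht), mul_div_assoc]
  refine ⟨update x' 1 L, ?_, fun t ht => ?_, fun t ht => update_of_ne ht.2.ne _ _, update_self ..⟩
  · rw [continuousOn_update_iff, hnhds, Icc_sdiff_right]
    exact ⟨hx'cont, fun _ => hx'1⟩
  · rcases ht.2.eq_or_lt with rfl | ht1
    · simpa using hasDerivWithinAt_Icc_of_tendsto_div_one_sub hlt (hx1 ▸ hq)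
    · rw [update_of_ne ht1.ne]
      exact (hderiv t ⟨ht.1, ht1⟩).hasDerivWithinAt
end

section
/- Let F:[0,1]→ℝ and define G on the closed unit disc 𝔻²⊂ℝ² by G(x,y)=F(√(x²+y²)). Then G is C¹ on 𝔻² if and only if F is C¹ on [0,1] with F'(0)=0. -/
/-!
Write `G = F ∘ ‖·‖`. Restricting `G` to a ray `r ↦ r • v` with `‖v‖ = 1` gives back `F` on
`[0, R]`, so `F` is `C¹` when `G` is; the rays through `v` and `-v` show that
`F'(0) = DG(0) v = DG(0) (-v) = -F'(0)`. Conversely, away from the origin `G` is `C¹` because the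
norm is smooth there. At the origin, `F r - F 0 = o(r)` makes `0` the derivative of `G`, and since
the norm is `1`-Lipschitz, `‖DG(p)‖ ≤ |F'(‖p‖)| → |F'(0)| = 0`, so `DG` is continuous there.
-/

open Set Metric Filter Topology Asymptotics

theorem DifferentiableOn.hasDerivAt_derivWithin_Icc {F : ℝ → ℝ} {a b r : ℝ}
    (hF : DifferentiableOn ℝ F (Icc a b)) (hr : r ∈ Ioo a b) :
    HasDerivAt F (derivWithin F (Icc a b) r) r := by
  have hmem : Icc a b ∈ 𝓝 r := Icc_mem_nhds hr.1 hr.2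
  rw [derivWithin_of_mem_nhds hmem]
  exact (hF.differentiableAt hmem).hasDerivAt

section NormedSpace

variable {E : Type*} [NormedAddCommGroup E] [NormedSpace ℝ E] {F : ℝ → ℝ} {R : ℝ}

theorem HasFDerivAt.hasDerivWithinAt_Ici_of_comp_norm {L : E →L[ℝ] ℝ}
    (h : HasFDerivAt (fun p : E => F ‖p‖) L 0) {v : E} (hv : ‖v‖ = 1) :
    HasDerivWithinAt F (L v) (Ici 0) 0 := by
  have hray : HasDerivAt (fun r : ℝ => r • v) v 0 := by
    simpa using (hasDerivAt_id (0 : ℝ)).smul_const v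
  rw [← zero_smul ℝ v] at h
  refine (h.comp_hasDerivAt 0 hray).hasDerivWithinAt.congr (fun r hr => ?_) (by simp)
  simp [norm_smul, hv, abs_of_nonneg (mem_Ici.1 hr)]

theorem derivWithin_Icc_zero_eq_zero_of_differentiableAt_comp_norm [Nontrivial E] (hR : 0 < R)
    (h : DifferentiableAt ℝ (fun p : E => F ‖p‖) 0) : derivWithin F (Icc 0 R) 0 = 0 := by
  obtain ⟨v, hv⟩ := exists_norm_eq E zero_le_one
  have hIcc : UniqueDiffWithinAt ℝ (Icc 0 R) 0 := uniqueDiffOn_Icc hR 0 (left_mem_Icc.2 hR.le)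
  have hpos := ((h.hasFDerivAt.hasDerivWithinAt_Ici_of_comp_norm hv).mono
    Icc_subset_Ici_self).derivWithin hIcc
  have hneg := ((h.hasFDerivAt.hasDerivWithinAt_Ici_of_comp_norm (v := -v)
    (by rwa [norm_neg])).mono Icc_subset_Ici_self).derivWithin hIcc
  rw [map_neg] at hneg
  linarith

theorem ContDiffOn.of_comp_norm [Nontrivial E] {n : WithTop ℕ∞}
    (h : ContDiffOn ℝ n (fun p : E => F ‖p‖) (closedBall 0 R)) : ContDiffOn ℝ n F (Icc 0 R) := by
  obtain ⟨v, hv⟩ := exists_norm_eq E zero_le_one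
  have hnorm : ∀ r ∈ Icc 0 R, ‖r • v‖ = r := fun r hr => by
    rw [norm_smul, hv, mul_one, Real.norm_of_nonneg hr.1]
  refine (h.comp (contDiff_id.smul (contDiff_const (c := v))).contDiffOn fun r hr => ?_).congr
    fun r hr => ?_
  · simpa [hnorm r hr] using hr.2
  · simp [hnorm r hr]

theorem hasFDerivAt_comp_norm_zero (h : HasDerivWithinAt F 0 (Ici 0) 0) :
    HasFDerivAt (fun p : E => F ‖p‖) (0 : E →L[ℝ] ℝ) 0 := by
  have hF : (fun r => F r - F 0) =o[𝓝[≥] 0] fun r => r := by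
    simpa using h.hasFDerivWithinAt.isLittleO
  have hnorm : Tendsto (‖·‖) (𝓝 (0 : E)) (𝓝[≥] 0) :=
    tendsto_nhdsWithin_iff.2 ⟨tendsto_norm_zero, .of_forall norm_nonneg⟩
  rw [hasFDerivAt_iff_isLittleO_nhds_zero]
  simpa [Function.comp_def] using
    (hF.comp_tendsto hnorm).trans_isBigO (isBigO_refl (fun p : E => p) _).norm_left

theorem norm_fderiv_comp_norm_le {p : E} {d : ℝ} (hF : HasDerivAt F d ‖p‖)
    (hp : DifferentiableAt ℝ (‖·‖) p) : ‖fderiv ℝ (fun q : E => F ‖q‖) p‖ ≤ |d| := by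
  have hG : HasFDerivAt (fun q : E => F ‖q‖) (d • fderiv ℝ (‖·‖) p) p :=
    hF.comp_hasFDerivAt p hp.hasFDerivAt
  rw [hG.fderiv, norm_smul, Real.norm_eq_abs]
  exact mul_le_of_le_one_right (abs_nonneg d)
    (by simpa using norm_fderiv_le_of_lipschitz ℝ (lipschitzWith_one_norm (E := E)))

end NormedSpace

section InnerProductSpace

variable {E : Type*} [NormedAddCommGroup E] [InnerProductSpace ℝ E] {F : ℝ → ℝ} {R : ℝ}

theorem contDiffAt_comp_norm_zero (hR : 0 < R) (hF : ContDiffOn ℝ 1 F (Icc 0 R))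
    (h0 : derivWithin F (Icc 0 R) 0 = 0) : ContDiffAt ℝ 1 (fun p : E => F ‖p‖) 0 := by
  set G := fun p : E => F ‖p‖
  have hdiff := hF.differentiableOn one_ne_zero
  have hG : ∀ p ∈ ball (0 : E) R, p ≠ 0 → ContDiffAt ℝ 1 G p := fun p hp hp0 =>
    (hF.contDiffAt (Icc_mem_nhds (norm_pos_iff.2 hp0) (mem_ball_zero_iff.1 hp))).comp p
      (contDiffAt_norm ℝ hp0)
  have hG0 : HasFDerivAt G 0 0 := hasFDerivAt_comp_norm_zero <| by
    simpa [h0] using (hdiff 0 (left_mem_Icc.2 hR.le)).hasDerivWithinAt.mono_of_mem_nhdsWithin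
      (Icc_mem_nhdsGE hR)
  have hbound : ∀ p ∈ ball (0 : E) R, ‖fderiv ℝ G p‖ ≤ |derivWithin F (Icc 0 R) ‖p‖| := by
    intro p hp
    rcases eq_or_ne p 0 with rfl | hp0
    · simp [hG0.fderiv]
    · exact norm_fderiv_comp_norm_le
        (hdiff.hasDerivAt_derivWithin_Icc ⟨norm_pos_iff.2 hp0, mem_ball_zero_iff.1 hp⟩)
        ((contDiffAt_norm ℝ hp0).differentiableAt one_ne_zero)
  have hnorm : Tendsto (‖·‖) (𝓝 (0 : E)) (𝓝[Icc 0 R] 0) := by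
    refine tendsto_nhdsWithin_iff.2 ⟨tendsto_norm_zero, ?_⟩
    filter_upwards [ball_mem_nhds (0 : E) hR] with p hp
      using ⟨norm_nonneg p, (mem_ball_zero_iff.1 hp).le⟩
  have hF' : Tendsto (fun p : E => |derivWithin F (Icc 0 R) ‖p‖|) (𝓝 0) (𝓝 0) := by
    simpa [h0] using
      ((hF.continuousOn_derivWithin (uniqueDiffOn_Icc hR) le_rfl 0
        (left_mem_Icc.2 hR.le)).tendsto.comp hnorm).abs
  have hcont0 : ContinuousAt (fderiv ℝ G) 0 := by
    rw [ContinuousAt, hG0.fderiv, tendsto_zero_iff_norm_tendsto_zero]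
    refine squeeze_zero' (.of_forall fun p => norm_nonneg _) ?_ hF'
    filter_upwards [ball_mem_nhds (0 : E) hR] with p hp using hbound p hp
  refine ((contDiffOn_succ_iff_fderiv_of_isOpen (n := 0) isOpen_ball).2
    ⟨fun p hp => ?_, by simp, contDiffOn_zero.2 fun p hp => ?_⟩).contDiffAt (ball_mem_nhds 0 hR)
  all_goals rcases eq_or_ne p 0 with rfl | hp0
  · exact hG0.differentiableAt.differentiableWithinAt
  · exact ((hG p hp hp0).differentiableAt one_ne_zero).differentiableWithinAt
  · exact hcont0.continuousWithinAt
  · exact ((hG p hp hp0).continuousAt_fderiv one_ne_zero).continuousWithinAt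

theorem contDiffOn_closedBall_comp_norm (hR : 0 < R) (hF : ContDiffOn ℝ 1 F (Icc 0 R))
    (h0 : derivWithin F (Icc 0 R) 0 = 0) :
    ContDiffOn ℝ 1 (fun p : E => F ‖p‖) (closedBall 0 R) := by
  intro p hp
  rcases eq_or_ne p 0 with rfl | hp0
  · exact (contDiffAt_comp_norm_zero hR hF h0).contDiffWithinAt
  · exact (hF ‖p‖ ⟨norm_nonneg p, mem_closedBall_zero_iff.1 hp⟩).comp p
      (contDiffAt_norm ℝ hp0).contDiffWithinAt
      fun q hq => ⟨norm_nonneg q, mem_closedBall_zero_iff.1 hq⟩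

theorem contDiffOn_closedBall_comp_norm_iff [Nontrivial E] (hR : 0 < R) :
    ContDiffOn ℝ 1 (fun p : E => F ‖p‖) (closedBall 0 R) ↔
      ContDiffOn ℝ 1 F (Icc 0 R) ∧ derivWithin F (Icc 0 R) 0 = 0 :=
  ⟨fun h => ⟨h.of_comp_norm, derivWithin_Icc_zero_eq_zero_of_differentiableAt_comp_norm hR
      ((h.differentiableOn one_ne_zero 0 (mem_closedBall_self hR.le)).differentiableAt
        (closedBall_mem_nhds 0 hR))⟩,
    fun h => contDiffOn_closedBall_comp_norm hR h.1 h.2⟩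

end InnerProductSpace

/-- The rotationally symmetric extension G(x,y) = F(√(x²+y²)) of a radial profile F to
the closed unit disc is C¹ if and only if F is C¹ on [0,1] with F'(0) = 0. -/
theorem stmt2 (F : ℝ → ℝ) (G : EuclideanSpace ℝ (Fin 2) → ℝ)
    (hG : ∀ p : EuclideanSpace ℝ (Fin 2), G p = F ‖p‖) :
    ContDiffOn ℝ 1 G (Metric.closedBall 0 1) ↔
      (ContDiffOn ℝ 1 F (Icc 0 1) ∧ derivWithin F (Icc 0 1) 0 = 0) := by
  rw [show G = fun p => F ‖p‖ from funext hG]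
  exact contDiffOn_closedBall_comp_norm_iff one_pos
end

section
/- Let f₁∈C¹[0,1] satisfy f₁(0)=0, f₁'(0)=1, and suppose f₁''(0) exists with f₁''(0)=0. Then the rotationally symmetric metric g = dt² + f₁(t)²dθ² on the punctured disc extends to a C¹ Riemannian metric on the disc 𝔻² with respect to Cartesian coordinates x=t cos θ, y=t sin θ; explicitly, the functions g_xx = 1 + (f₁(t)²/t² − 1)sin²θ, g_yy = 1 + (f₁(t)²/t² − 1)cos²θ, g_xy = 2(f₁(t)²/t² − 1)cos θ sin θ (defined to equal 1,1,0 respectively at the origin) are C¹ on 𝔻². -/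
/-!
Write Φ(t) = (f₁(t)² − t²)/t⁴. Off the origin each component is a constant plus Φ(|v|)·Q(v) for a
quadratic form Q (namely y², x² and 2xy), and a function F(v) = Φ(|v|)·Q(v) is C¹ on the closed
disc as soon as tΦ(t) → 0 and t²Φ'(t) → 0 as t → 0⁺. The first limit gives F(v) = o(|v|), so
F'(0) = 0; together they make F'(v) = Φ'(|v|)Q(v) d|v| + Φ(|v|) dQ(v) tend to 0. For f₁ both
limits come from f₁(t)/t → 1, (f₁'(t) − 1)/t → f₁''(0) = 0 and, by l'Hôpital,
(f₁(t) − t)/t² → 0.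
-/

open Set Filter Topology

section RadialQuadratic

variable {E : Type*} [NormedAddCommGroup E] [InnerProductSpace ℝ E]

theorem ContinuousLinearMap.hasFDerivAt_apply_self (B : E →L[ℝ] E →L[ℝ] ℝ) (v : E) :
    HasFDerivAt (fun w => B w w) (B v + B.flip v) v := by
  refine (B.hasFDerivAt_of_bilinear (hasFDerivAt_id v) (hasFDerivAt_id v)).congr_fderiv ?_
  ext w
  simp

theorem ContinuousLinearMap.norm_add_flip_apply_le (B : E →L[ℝ] E →L[ℝ] ℝ) (v : E) :
    ‖B v + B.flip v‖ ≤ 2 * ‖B‖ * ‖v‖ :=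
  calc ‖B v + B.flip v‖ ≤ ‖B‖ * ‖v‖ + ‖B.flip‖ * ‖v‖ :=
        (norm_add_le _ _).trans (add_le_add (B.le_opNorm v) (B.flip.le_opNorm v))
    _ = 2 * ‖B‖ * ‖v‖ := by rw [B.opNorm_flip]; ring

theorem norm_fderiv_norm_le_one (v : E) : ‖fderiv ℝ (‖·‖) v‖ ≤ 1 := by
  simpa using norm_fderiv_le_of_lipschitz ℝ (lipschitzWith_one_norm (E := E)) (x₀ := v)

noncomputable def radialQuadraticFDeriv (Φ Φ' : ℝ → ℝ) (B : E →L[ℝ] E →L[ℝ] ℝ) (v : E) :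
    E →L[ℝ] ℝ :=
  (Φ' ‖v‖ * B v v) • fderiv ℝ (‖·‖) v + Φ ‖v‖ • (B v + B.flip v)

variable {Φ Φ' : ℝ → ℝ} {r : ℝ} (B : E →L[ℝ] E →L[ℝ] ℝ)

theorem hasFDerivAt_radial_mul_apply_self_zero
    (hΦ : Tendsto (fun t => t * Φ t) (𝓝[>] 0) (𝓝 0)) :
    HasFDerivAt (fun v => Φ ‖v‖ * B v v) (0 : E →L[ℝ] ℝ) 0 := by
  have hk : Tendsto (fun v : E => ‖v‖ * Φ ‖v‖) (𝓝 0) (𝓝 0) := by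
    have hne : Tendsto (fun v : E => ‖v‖ * Φ ‖v‖) (𝓝[≠] 0) (𝓝 0) :=
      hΦ.comp tendsto_norm_nhdsNE_zero
    have hc : ContinuousAt (fun v : E => ‖v‖ * Φ ‖v‖) 0 :=
      continuousWithinAt_compl_self.1 (by simpa [ContinuousWithinAt] using hne)
    simpa using hc.tendsto
  rw [hasFDerivAt_iff_isLittleO_nhds_zero]
  simp only [zero_add, norm_zero, map_zero, zero_apply, mul_zero, sub_zero]
  have hbound : (fun v => Φ ‖v‖ * B v v) =O[𝓝 (0 : E)] fun v => (‖v‖ * Φ ‖v‖) * ‖v‖ :=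
    Asymptotics.IsBigO.of_bound ‖B‖ (Eventually.of_forall fun v => by
      calc ‖Φ ‖v‖ * B v v‖ ≤ |Φ ‖v‖| * (‖B‖ * ‖v‖ * ‖v‖) := by
            rw [norm_mul, Real.norm_eq_abs]; gcongr; exact B.le_opNorm₂ v v
        _ = ‖B‖ * ‖(‖v‖ * Φ ‖v‖) * ‖v‖‖ := by
            simp only [norm_mul, Real.norm_eq_abs, abs_norm]; ring)
  refine hbound.trans_isLittleO ((((Asymptotics.isLittleO_one_iff ℝ).2 hk).mul_isBigO
    (Asymptotics.isBigO_refl (fun v : E => ‖v‖) _)).trans_isBigO ?_)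
  simpa using Asymptotics.isBigO_norm_left.2 (Asymptotics.isBigO_refl (fun v : E => v) (𝓝 0))

theorem hasFDerivWithinAt_radial_mul_apply_self {v : E} (hv : v ≠ 0)
    (hΦ : HasDerivWithinAt Φ (Φ' ‖v‖) (Ioc 0 r) ‖v‖) :
    HasFDerivWithinAt (fun v => Φ ‖v‖ * B v v) (radialQuadraticFDeriv Φ Φ' B v)
      (Metric.closedBall 0 r) v := by
  have hnorm : HasFDerivAt (‖·‖) (fderiv ℝ (‖·‖) v) v :=
    ((contDiffAt_norm ℝ hv (n := 1)).differentiableAt one_ne_zero).hasFDerivAt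
  have hmaps : MapsTo (‖·‖) (Metric.closedBall (0 : E) r \ {0}) (Ioc 0 r) := fun w hw =>
    ⟨norm_pos_iff.2 hw.2, mem_closedBall_zero_iff.1 hw.1⟩
  have h := (hΦ.comp_hasFDerivWithinAt v hnorm.hasFDerivWithinAt hmaps).mul
    (B.hasFDerivAt_apply_self v).hasFDerivWithinAt
  refine (h.congr_fderiv ?_).mono_of_mem_nhdsWithin
    (inter_mem_nhdsWithin _ (isOpen_compl_singleton.mem_nhds hv))
  ext w
  simp only [Function.comp_apply, smul_add, add_apply, smul_apply, smul_eq_mul,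
    ContinuousLinearMap.flip_apply, radialQuadraticFDeriv]
  ring

theorem tendsto_radialQuadraticFDeriv_zero
    (hΦ : Tendsto (fun t => t * Φ t) (𝓝[>] 0) (𝓝 0))
    (hΦ' : Tendsto (fun t => t ^ 2 * Φ' t) (𝓝[>] 0) (𝓝 0)) :
    Tendsto (radialQuadraticFDeriv Φ Φ' B) (𝓝[≠] 0) (𝓝 0) := by
  have hbound : ∀ v : E, ‖radialQuadraticFDeriv Φ Φ' B v‖ ≤
      ‖B‖ * (|‖v‖ ^ 2 * Φ' ‖v‖| + 2 * |‖v‖ * Φ ‖v‖|) := fun v =>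
    calc ‖radialQuadraticFDeriv Φ Φ' B v‖
        ≤ |Φ' ‖v‖| * (‖B‖ * ‖v‖ * ‖v‖) * 1 + |Φ ‖v‖| * (2 * ‖B‖ * ‖v‖) := by
          refine (norm_add_le _ _).trans (add_le_add ?_ ?_) <;> rw [norm_smul, Real.norm_eq_abs]
          · rw [abs_mul]
            gcongr
            exacts [(Real.norm_eq_abs _).symm.trans_le (B.le_opNorm₂ v v),
              norm_fderiv_norm_le_one v]
          · exact mul_le_mul_of_nonneg_left (B.norm_add_flip_apply_le v) (abs_nonneg _)
      _ = ‖B‖ * (|‖v‖ ^ 2 * Φ' ‖v‖| + 2 * |‖v‖ * Φ ‖v‖|) := by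
          simp only [abs_mul, abs_pow, abs_norm]; ring
  refine squeeze_zero_norm hbound ?_
  simpa [Function.comp_def] using ((hΦ'.abs.add (hΦ.abs.const_mul 2)).const_mul ‖B‖).comp
    (tendsto_norm_nhdsNE_zero (E := E))

theorem continuousOn_radialQuadraticFDeriv (hΦ : ContinuousOn Φ (Ioc 0 r))
    (hΦ' : ContinuousOn Φ' (Ioc 0 r)) :
    ContinuousOn (radialQuadraticFDeriv Φ Φ' B) (Metric.closedBall 0 r \ {0}) := by
  have hmaps : MapsTo (‖·‖) (Metric.closedBall (0 : E) r \ {0}) (Ioc 0 r) := fun w hw =>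
    ⟨norm_pos_iff.2 hw.2, mem_closedBall_zero_iff.1 hw.1⟩
  have hnorm : ContinuousOn (fderiv ℝ (‖·‖)) (Metric.closedBall (0 : E) r \ {0}) := fun v hv =>
    ((contDiffAt_norm ℝ hv.2 (n := 1)).continuousAt_fderiv one_ne_zero).continuousWithinAt
  have := hΦ.comp continuous_norm.continuousOn hmaps
  have := hΦ'.comp continuous_norm.continuousOn hmaps
  unfold radialQuadraticFDeriv
  fun_prop

theorem contDiffOn_closedBall_radial_mul_apply_self
    (hΦ : ∀ t ∈ Ioc 0 r, HasDerivWithinAt Φ (Φ' t) (Ioc 0 r) t)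
    (hΦ' : ContinuousOn Φ' (Ioc 0 r))
    (hlim : Tendsto (fun t => t * Φ t) (𝓝[>] 0) (𝓝 0))
    (hlim' : Tendsto (fun t => t ^ 2 * Φ' t) (𝓝[>] 0) (𝓝 0)) :
    ContDiffOn ℝ 1 (fun v => Φ ‖v‖ * B v v) (Metric.closedBall (0 : E) r) := by
  have hF'0 : radialQuadraticFDeriv Φ Φ' B 0 = 0 := by simp [radialQuadraticFDeriv]
  have hF'cont : ContinuousOn (radialQuadraticFDeriv Φ Φ' B) (Metric.closedBall 0 r) := by
    intro v hv
    rcases eq_or_ne v 0 with rfl | hv0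
    · refine (continuousWithinAt_compl_self.1 ?_).continuousWithinAt
      rw [ContinuousWithinAt, hF'0]
      exact tendsto_radialQuadraticFDeriv_zero B hlim hlim'
    · exact (continuousOn_radialQuadraticFDeriv B
        (fun t ht => (hΦ t ht).continuousWithinAt) hΦ' v ⟨hv, hv0⟩).mono_of_mem_nhdsWithin
        (inter_mem_nhdsWithin _ (isOpen_compl_singleton.mem_nhds hv0))
  rw [show (1 : WithTop ℕ∞) = 0 + 1 from rfl, contDiffOn_succ_iff_hasFDerivWithinAt (by simp)]
  intro v hv
  refine ⟨Metric.closedBall 0 r, by rw [insert_eq_of_mem hv]; exact self_mem_nhdsWithin,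
    by simp, radialQuadraticFDeriv Φ Φ' B, fun w hw => ?_, contDiffOn_zero.2 hF'cont⟩
  rcases eq_or_ne w 0 with rfl | hw0
  · rw [hF'0]
    exact (hasFDerivAt_radial_mul_apply_self_zero B hlim).hasFDerivWithinAt
  · exact hasFDerivWithinAt_radial_mul_apply_self B hw0
      (hΦ _ ⟨norm_pos_iff.2 hw0, mem_closedBall_zero_iff.1 hw⟩)

end RadialQuadratic

section WarpingFunction

noncomputable def warpingDefect (f : ℝ → ℝ) (t : ℝ) : ℝ := (f t ^ 2 - t ^ 2) / t ^ 4

noncomputable def warpingDefectDeriv (f f' : ℝ → ℝ) (t : ℝ) : ℝ :=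
  (2 * t * (f t * f' t - t) - 4 * (f t ^ 2 - t ^ 2)) / t ^ 5

variable {f f' : ℝ → ℝ}

theorem hasDerivWithinAt_warpingDefect {s : Set ℝ} {t : ℝ} (ht : t ≠ 0)
    (hf : HasDerivWithinAt f (f' t) s t) :
    HasDerivWithinAt (warpingDefect f) (warpingDefectDeriv f f' t) s t := by
  have h := ((hf.fun_pow 2).sub (hasDerivWithinAt_pow 2 t)).div (hasDerivWithinAt_pow 4 t)
    (pow_ne_zero 4 ht)
  refine h.congr_deriv ?_
  simp only [warpingDefectDeriv, Pi.sub_apply]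
  field_simp
  ring

theorem ContinuousOn.warpingDefectDeriv {s : Set ℝ} (hf : ContinuousOn f s)
    (hf' : ContinuousOn f' s) (hs : (0 : ℝ) ∉ s) :
    ContinuousOn (warpingDefectDeriv f f') s := by
  refine ContinuousOn.div (by fun_prop) (by fun_prop) fun t ht => pow_ne_zero 5 ?_
  rintro rfl
  exact hs ht

theorem tendsto_sub_div_of_hasDerivWithinAt {s : Set ℝ} {a : ℝ} (hs : s ∈ 𝓝[≥] 0)
    (hf : HasDerivWithinAt f a s 0) :
    Tendsto (fun t => (f t - f 0) / t) (𝓝[>] 0) (𝓝 a) := by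
  have h := (hasDerivWithinAt_iff_tendsto_slope' (lt_irrefl 0)).1
    (hf.mono_of_mem_nhdsWithin hs).Ioi_of_Ici
  exact h.congr fun t => by simp [slope_def_field]

theorem tendsto_sub_div_sq_of_deriv (hf : ∀ᶠ t in 𝓝[>] 0, HasDerivAt f (f' t) t)
    (h1 : Tendsto (fun t => f t / t) (𝓝[>] 0) (𝓝 1))
    (h2 : Tendsto (fun t => (f' t - 1) / t) (𝓝[>] 0) (𝓝 0)) :
    Tendsto (fun t => (f t - t) / t ^ 2) (𝓝[>] 0) (𝓝 0) := by
  have hid : Tendsto (fun t : ℝ => t) (𝓝[>] 0) (𝓝 0) := nhdsWithin_le_nhds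
  refine HasDerivAt.lhopital_zero_nhdsGT (f' := fun t => f' t - 1) (g' := fun t => 2 * t)
    (hf.mono fun t ht => ht.sub (hasDerivAt_id t)) ?_ ?_ ?_ ?_ ?_
  · exact Eventually.of_forall fun t => by simpa using hasDerivAt_pow 2 t
  · filter_upwards [self_mem_nhdsWithin] with t (ht : 0 < t)
    positivity
  · have h := (h1.mul hid).sub hid
    simp only [one_mul, sub_self] at h
    refine h.congr' ?_
    filter_upwards [self_mem_nhdsWithin] with t (ht : 0 < t)
    field_simp
  · simpa using hid.pow 2
  · simpa [div_div, mul_comm] using h2.div_const 2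

theorem tendsto_mul_warpingDefect (hf : ∀ᶠ t in 𝓝[>] 0, HasDerivAt f (f' t) t)
    (h1 : Tendsto (fun t => f t / t) (𝓝[>] 0) (𝓝 1))
    (h2 : Tendsto (fun t => (f' t - 1) / t) (𝓝[>] 0) (𝓝 0)) :
    Tendsto (fun t => t * warpingDefect f t) (𝓝[>] 0) (𝓝 0) := by
  have h := (tendsto_sub_div_sq_of_deriv hf h1 h2).mul (h1.add_const 1)
  rw [zero_mul] at h
  refine h.congr' ?_
  filter_upwards [self_mem_nhdsWithin] with t (ht : 0 < t)
  simp only [warpingDefect]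
  field_simp
  ring

theorem tendsto_sq_mul_warpingDefectDeriv (hf : ∀ᶠ t in 𝓝[>] 0, HasDerivAt f (f' t) t)
    (h1 : Tendsto (fun t => f t / t) (𝓝[>] 0) (𝓝 1))
    (h2 : Tendsto (fun t => (f' t - 1) / t) (𝓝[>] 0) (𝓝 0)) :
    Tendsto (fun t => t ^ 2 * warpingDefectDeriv f f' t) (𝓝[>] 0) (𝓝 0) := by
  have h3 := tendsto_sub_div_sq_of_deriv hf h1 h2
  have h := ((h1.mul h2).add h3).const_mul 2 |>.sub ((h3.mul (h1.add_const 1)).const_mul 4)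
  simp only [mul_zero, zero_mul, add_zero, sub_zero] at h
  refine h.congr' ?_
  filter_upwards [self_mem_nhdsWithin] with t (ht : 0 < t)
  simp only [warpingDefectDeriv]
  field_simp
  ring

end WarpingFunction

theorem Complex.re_sq_add_im_sq (z : ℂ) : z.re ^ 2 + z.im ^ 2 = ‖z‖ ^ 2 := by
  rw [Complex.sq_norm, Complex.normSq_apply]
  ring

/-- `ℂ` serves as the Euclidean plane: the norm of `ℝ × ℝ` is the sup norm. -/
theorem contDiffOn_unitDisc_of_radial {Φ Φ' : ℝ → ℝ}
    (hΦ : ∀ t ∈ Ioc 0 1, HasDerivWithinAt Φ (Φ' t) (Ioc 0 1) t)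
    (hΦ' : ContinuousOn Φ' (Ioc 0 1))
    (hlim : Tendsto (fun t => t * Φ t) (𝓝[>] 0) (𝓝 0))
    (hlim' : Tendsto (fun t => t ^ 2 * Φ' t) (𝓝[>] 0) (𝓝 0))
    (B : ℂ →L[ℝ] ℂ →L[ℝ] ℝ) {g : ℝ × ℝ → ℝ} {c : ℝ} (hg0 : g 0 = c)
    (hg : ∀ z : ℂ, z ≠ 0 → g (z.re, z.im) = c + Φ ‖z‖ * B z z) :
    ContDiffOn ℝ 1 g {p : ℝ × ℝ | p.1 ^ 2 + p.2 ^ 2 ≤ 1} := by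
  have hpre : Complex.equivRealProdCLM ⁻¹' {p : ℝ × ℝ | p.1 ^ 2 + p.2 ^ 2 ≤ 1} =
      Metric.closedBall 0 1 := by
    ext z
    simp [Complex.re_sq_add_im_sq]
  have hcomp : g ∘ Complex.equivRealProdCLM = fun z => c + Φ ‖z‖ * B z z := by
    funext z
    rcases eq_or_ne z 0 with rfl | hz
    · rw [Function.comp_apply, map_zero, hg0]
      simp
    · exact hg z hz
  rw [← Complex.equivRealProdCLM.contDiffOn_comp_iff, hpre, hcomp]
  exact contDiffOn_const.add (contDiffOn_closedBall_radial_mul_apply_self B hΦ hΦ' hlim hlim')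

theorem contDiffOn_unitDisc_of_warpingFunction {f : ℝ → ℝ} (hf : ContDiffOn ℝ 1 f (Icc 0 1))
    (hf0 : f 0 = 0) (hf'0 : derivWithin f (Icc 0 1) 0 = 1)
    (hf''0 : HasDerivWithinAt (derivWithin f (Icc 0 1)) 0 (Icc 0 1) 0)
    (B : ℂ →L[ℝ] ℂ →L[ℝ] ℝ) {g : ℝ × ℝ → ℝ} {c : ℝ} (hg0 : g 0 = c)
    (hg : ∀ z : ℂ, z ≠ 0 → g (z.re, z.im) = c + warpingDefect f ‖z‖ * B z z) :
    ContDiffOn ℝ 1 g {p : ℝ × ℝ | p.1 ^ 2 + p.2 ^ 2 ≤ 1} := by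
  set f' := derivWithin f (Icc 0 1)
  have hderiv : ∀ t ∈ Icc (0 : ℝ) 1, HasDerivWithinAt f (f' t) (Icc 0 1) t := fun t ht =>
    (hf.differentiableOn one_ne_zero t ht).hasDerivWithinAt
  have hΦ : ∀ t ∈ Ioc (0 : ℝ) 1,
      HasDerivWithinAt (warpingDefect f) (warpingDefectDeriv f f' t) (Ioc 0 1) t :=
    fun t ht => hasDerivWithinAt_warpingDefect ht.1.ne'
      ((hderiv t (Ioc_subset_Icc_self ht)).mono Ioc_subset_Icc_self)
  have hΦ' : ContinuousOn (warpingDefectDeriv f f') (Ioc 0 1) :=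
    (hf.continuousOn.mono Ioc_subset_Icc_self).warpingDefectDeriv
      ((hf.continuousOn_derivWithin (uniqueDiffOn_Icc one_pos) le_rfl).mono Ioc_subset_Icc_self)
      (by simp)
  have hf' : ∀ᶠ t in 𝓝[>] 0, HasDerivAt f (f' t) t := by
    filter_upwards [Ioo_mem_nhdsGT one_pos] with t ht
    exact (hderiv t (Ioo_subset_Icc_self ht)).hasDerivAt (Icc_mem_nhds ht.1 ht.2)
  have h1 : Tendsto (fun t => f t / t) (𝓝[>] 0) (𝓝 1) := by
    simpa [hf0, hf'0] using tendsto_sub_div_of_hasDerivWithinAt (Icc_mem_nhdsGE one_pos)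
      (hderiv 0 ⟨le_rfl, zero_le_one⟩)
  have h2 : Tendsto (fun t => (f' t - 1) / t) (𝓝[>] 0) (𝓝 0) := by
    simpa [hf'0] using tendsto_sub_div_of_hasDerivWithinAt (Icc_mem_nhdsGE one_pos) hf''0
  exact contDiffOn_unitDisc_of_radial hΦ hΦ' (tendsto_mul_warpingDefect hf' h1 h2)
    (tendsto_sq_mul_warpingDefectDeriv hf' h1 h2) B hg0 hg

theorem warpingDefect_norm_mul {f : ℝ → ℝ} {z : ℂ} (hz : z ≠ 0) (q : ℝ) :
    (f √(z.re ^ 2 + z.im ^ 2) ^ 2 / (z.re ^ 2 + z.im ^ 2) - 1) * (q / (z.re ^ 2 + z.im ^ 2)) =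
      warpingDefect f ‖z‖ * q := by
  have hz' : ‖z‖ ≠ 0 := norm_ne_zero_iff.2 hz
  rw [Complex.re_sq_add_im_sq, Real.sqrt_sq (norm_nonneg z), warpingDefect]
  field_simp

/-- C¹ regularity of the rotationally symmetric metric dt² + f₁(t)²dθ² on the disc in
Cartesian coordinates: with t = √(x²+y²), the components
g_xx = 1 + (f₁(t)²/t² − 1)sin²θ, g_yy = 1 + (f₁(t)²/t² − 1)cos²θ,
g_xy = 2(f₁(t)²/t² − 1)cosθ sinθ (equal to 1,1,0 at the origin) are C¹ on 𝔻². -/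
theorem stmt3 (f₁ : ℝ → ℝ)
    (hf₁ : ContDiffOn ℝ 1 f₁ (Icc 0 1))
    (hf₁0 : f₁ 0 = 0)
    (hf₁'0 : derivWithin f₁ (Icc 0 1) 0 = 1)
    (hf₁''0 : HasDerivWithinAt (derivWithin f₁ (Icc 0 1)) 0 (Icc 0 1) 0)
    (gxx gyy gxy : ℝ × ℝ → ℝ)
    (hgxx : ∀ p : ℝ × ℝ, p ≠ 0 → gxx p =
      1 + ((f₁ (Real.sqrt (p.1 ^ 2 + p.2 ^ 2))) ^ 2 / (p.1 ^ 2 + p.2 ^ 2) - 1) *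
        (p.2 ^ 2 / (p.1 ^ 2 + p.2 ^ 2)))
    (hgyy : ∀ p : ℝ × ℝ, p ≠ 0 → gyy p =
      1 + ((f₁ (Real.sqrt (p.1 ^ 2 + p.2 ^ 2))) ^ 2 / (p.1 ^ 2 + p.2 ^ 2) - 1) *
        (p.1 ^ 2 / (p.1 ^ 2 + p.2 ^ 2)))
    (hgxy : ∀ p : ℝ × ℝ, p ≠ 0 → gxy p =
      2 * ((f₁ (Real.sqrt (p.1 ^ 2 + p.2 ^ 2))) ^ 2 / (p.1 ^ 2 + p.2 ^ 2) - 1) *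
        (p.1 * p.2 / (p.1 ^ 2 + p.2 ^ 2)))
    (hgxx0 : gxx 0 = 1) (hgyy0 : gyy 0 = 1) (hgxy0 : gxy 0 = 0) :
    ContDiffOn ℝ 1 gxx {p : ℝ × ℝ | p.1 ^ 2 + p.2 ^ 2 ≤ 1} ∧
    ContDiffOn ℝ 1 gyy {p : ℝ × ℝ | p.1 ^ 2 + p.2 ^ 2 ≤ 1} ∧
    ContDiffOn ℝ 1 gxy {p : ℝ × ℝ | p.1 ^ 2 + p.2 ^ 2 ≤ 1} := by
  have key := contDiffOn_unitDisc_of_warpingFunction hf₁ hf₁0 hf₁'0 hf₁''0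
  have hne : ∀ z : ℂ, z ≠ 0 → (z.re, z.im) ≠ 0 := fun z hz => by
    simpa [Prod.ext_iff, Complex.ext_iff] using hz
  refine ⟨key (Complex.imCLM.smulRight Complex.imCLM) hgxx0 fun z hz => ?_,
    key (Complex.reCLM.smulRight Complex.reCLM) hgyy0 fun z hz => ?_,
    key ((2 • Complex.reCLM).smulRight Complex.imCLM) hgxy0 fun z hz => ?_⟩
  · rw [hgxx _ (hne z hz), warpingDefect_norm_mul hz]
    simp [sq]
  · rw [hgyy _ (hne z hz), warpingDefect_norm_mul hz]
    simp [sq]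
  · rw [hgxy _ (hne z hz), mul_assoc, warpingDefect_norm_mul hz]
    simp only [ContinuousLinearMap.smulRight_apply, smul_apply, Complex.reCLM_apply, nsmul_eq_mul,
      Nat.cast_ofNat, Complex.imCLM_apply, smul_eq_mul, zero_add]
    ring
end

section
/- Let a:[½,1)→ℝ be continuous with lim_{t→1⁻} a(t) = +∞, and let b:[½,1]→ℝ be continuous with b of one sign (b≥0 everywhere or b≤0 everywhere) on [½,1]. Suppose f₂:[½,1]→ℝ is C² on [½,1), continuous on [½,1], satisfies f₂''(t) = a(t)f₂'(t) + b(t) on [½,1), f₂' extends continuously to 1, and f₂'(½)=0 and f₂'(1)=0. Then b ≡ 0 on [½,1] and f₂ is constant. -/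
/-!
Integrating factor: with `A' = a`, the function `g = exp (-A) * f₂'` satisfies `g' = exp (-A) * b`,
so for `b ≥ 0` it is monotone on `[½, 1)`. It vanishes at `½`, and also tends to `0` at `1`, because
`a ≥ 0` near `1` keeps `A` bounded below there, so `exp (-A)` stays bounded while `f₂' → 0`.
Hence `g ≡ 0`, i.e. `f₂' ≡ 0`, and then the equation gives `b ≡ 0`.
-/

open Set Filter Topology Real

variable {p q : ℝ} {a b v A g : ℝ → ℝ}

lemma exists_continuousOn_hasDerivAt_of_continuousOn_Ico (ha : ContinuousOn a (Ico p q)) :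
    ∃ A : ℝ → ℝ, ContinuousOn A (Ico p q) ∧ ∀ t ∈ Ioo p q, HasDerivAt A (a t) t := by
  have hint : ∀ y ∈ Ico p q, MeasureTheory.IntegrableOn a (uIcc p y) := fun y hy => by
    rw [uIcc_of_le hy.1]
    exact (ha.mono (Icc_subset_Ico_right hy.2)).integrableOn_Icc
  refine ⟨fun t => ∫ s in p..t, a s, fun t ht => ?_, fun t ht => ?_⟩
  · obtain ⟨y, hty, hyq⟩ := exists_between ht.2
    have hcont := intervalIntegral.continuousOn_primitive_interval (hint y ⟨ht.1.trans hty.le, hyq⟩)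
    rw [uIcc_of_le (ht.1.trans hty.le)] at hcont
    refine (hcont t ⟨ht.1, hty.le⟩).mono_of_mem_nhdsWithin ?_
    exact mem_nhdsWithin.2 ⟨Iio y, isOpen_Iio, hty, fun s hs => ⟨hs.2.1, hs.1.le⟩⟩
  · refine intervalIntegral.integral_hasDerivAt_right
      ((hint t ⟨ht.1.le, ht.2⟩).intervalIntegrable) ?_ ?_
    · exact (ha.mono Ioo_subset_Ico_self).stronglyMeasurableAtFilter isOpen_Ioo t ht
    · exact ha.continuousAt (mem_of_superset (Ioo_mem_nhds ht.1 ht.2) Ioo_subset_Ico_self)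

lemma exists_eventually_le_of_hasDerivAt_of_tendsto_atTop (hpq : p < q)
    (hA : ∀ t ∈ Ioo p q, HasDerivAt A (a t) t) (ha : Tendsto a (𝓝[<] q) atTop) :
    ∃ m, ∀ᶠ t in 𝓝[<] q, m ≤ A t := by
  obtain ⟨c, hcq, hc⟩ := mem_nhdsLT_iff_exists_Ioo_subset.1 (ha.eventually_ge_atTop 0)
  set c' := max c p
  have hc'q : c' < q := max_lt hcq hpq
  have hsub : Ioo c' q ⊆ Ioo p q := Ioo_subset_Ioo_left (le_max_right c p)
  have hmono : MonotoneOn A (Ioo c' q) := by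
    refine monotoneOn_of_hasDerivWithinAt_nonneg (f' := a) (convex_Ioo c' q)
      (fun t ht => (hA t (hsub ht)).continuousAt.continuousWithinAt) ?_ ?_
    · exact fun t ht => (hA t (hsub (interior_subset ht))).hasDerivWithinAt
    · rw [interior_Ioo]
      exact fun t ht => hc ⟨(le_max_left c p).trans_lt ht.1, ht.2⟩
  obtain ⟨t₀, hc't₀, ht₀q⟩ := exists_between hc'q
  refine ⟨A t₀, ?_⟩
  filter_upwards [Ioo_mem_nhdsLT ht₀q] with t ht
  exact hmono ⟨hc't₀, ht₀q⟩ ⟨hc't₀.trans ht.1, ht.2⟩ ht.1.le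

lemma monotoneOn_exp_neg_mul {s : Set ℝ} (hs : Convex ℝ s) (hA : ContinuousOn A s)
    (hA' : ∀ t ∈ interior s, HasDerivAt A (a t) t) (hv : ContinuousOn v s)
    (hv' : ∀ t ∈ interior s, HasDerivAt v (a t * v t + b t) t)
    (hb : ∀ t ∈ interior s, 0 ≤ b t) :
    MonotoneOn (fun t => exp (-A t) * v t) s := by
  refine monotoneOn_of_hasDerivWithinAt_nonneg (f' := fun t => exp (-A t) * b t) hs
    ((continuous_exp.comp_continuousOn hA.neg).mul hv) (fun t ht => ?_)
    (fun t ht => mul_nonneg (exp_pos _).le (hb t ht))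
  have hderiv : HasDerivAt (fun x => exp (-A x) * v x)
      (exp (-A t) * -a t * v t + exp (-A t) * (a t * v t + b t)) t :=
    ((hA' t ht).neg.exp).mul (hv' t ht)
  exact hderiv.hasDerivWithinAt.congr_deriv (by ring)

lemma MonotoneOn.eq_of_tendsto_nhdsLT (hg : MonotoneOn g (Ico p q))
    (hlim : Tendsto g (𝓝[<] q) (𝓝 (g p))) {t : ℝ} (ht : t ∈ Ico p q) : g t = g p := by
  refine le_antisymm (ge_of_tendsto hlim ?_) (hg ⟨le_rfl, ht.1.trans_lt ht.2⟩ ht ht.1)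
  filter_upwards [Ioo_mem_nhdsLT ht.2] with s hs
  exact hg ht ⟨ht.1.trans hs.1.le, hs.2⟩ hs.1.le

lemma eqOn_zero_of_hasDerivAt_of_nonneg (hpq : p < q) (ha : ContinuousOn a (Ico p q))
    (haTop : Tendsto a (𝓝[<] q) atTop) (hb : ∀ t ∈ Ioo p q, 0 ≤ b t)
    (hv : ContinuousOn v (Icc p q)) (hv' : ∀ t ∈ Ioo p q, HasDerivAt v (a t * v t + b t) t)
    (hp : v p = 0) (hq : v q = 0) : EqOn v 0 (Icc p q) := by
  obtain ⟨A, hAc, hA'⟩ := exists_continuousOn_hasDerivAt_of_continuousOn_Ico ha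
  obtain ⟨m, hm⟩ := exists_eventually_le_of_hasDerivAt_of_tendsto_atTop hpq hA' haTop
  set g := fun t => exp (-A t) * v t
  have hmono : MonotoneOn g (Ico p q) := by
    rw [← interior_Ico] at hA' hv' hb
    exact monotoneOn_exp_neg_mul (convex_Ico p q) hAc hA' (hv.mono Ico_subset_Icc_self) hv' hb
  have hv_lim : Tendsto v (𝓝[<] q) (𝓝 0) := by
    rw [← hq, ← nhdsWithin_Ioo_eq_nhdsLT hpq]
    exact (hv q (right_mem_Icc.2 hpq.le)).mono Ioo_subset_Icc_self
  have hexp_bdd : IsBoundedUnder (· ≤ ·) (𝓝[<] q) (norm ∘ fun t => exp (-A t)) := by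
    refine isBoundedUnder_of_eventually_le (a := exp (-m)) ?_
    filter_upwards [hm] with t ht
    simpa [abs_of_pos (exp_pos _)] using ht
  have hg_lim : Tendsto g (𝓝[<] q) (𝓝 (g p)) := by
    simpa [g, hp] using isBoundedUnder_le_mul_tendsto_zero hexp_bdd hv_lim
  intro t ht
  rcases ht.2.lt_or_eq with htq | rfl
  · have hgt : g t = 0 := by simpa [g, hp] using hmono.eq_of_tendsto_nhdsLT hg_lim ⟨ht.1, htq⟩
    simpa [g, (exp_pos _).ne'] using hgt
  · exact hq

lemma eqOn_zero_of_hasDerivAt_of_nonpos (hpq : p < q) (ha : ContinuousOn a (Ico p q))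
    (haTop : Tendsto a (𝓝[<] q) atTop) (hb : ∀ t ∈ Ioo p q, b t ≤ 0)
    (hv : ContinuousOn v (Icc p q)) (hv' : ∀ t ∈ Ioo p q, HasDerivAt v (a t * v t + b t) t)
    (hp : v p = 0) (hq : v q = 0) : EqOn v 0 (Icc p q) := by
  have hneg : EqOn (-v) 0 (Icc p q) := by
    refine eqOn_zero_of_hasDerivAt_of_nonneg (b := -b) hpq ha haTop
      (fun t ht => neg_nonneg.2 (hb t ht)) hv.neg (fun t ht => ?_) (by simp [hp]) (by simp [hq])
    exact (hv' t ht).neg.congr_deriv (by simp only [Pi.neg_apply]; ring)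
  exact fun t ht => neg_eq_zero.1 (hneg ht)

/-- Maximum-principle type result: if f₂'' = a f₂' + b on [½,1) with a → +∞ at 1,
b continuous of one sign, and f₂'(½) = f₂'(1) = 0, then b ≡ 0 and f₂ is constant. -/
theorem stmt5 (a b f₂ f₂' : ℝ → ℝ)
    (ha : ContinuousOn a (Ico (1/2) 1))
    (haTop : Tendsto a (nhdsWithin 1 (Iio 1)) atTop)
    (hb : ContinuousOn b (Icc (1/2) 1))
    (hbsign : (∀ t ∈ Icc (1/2:ℝ) 1, 0 ≤ b t) ∨ (∀ t ∈ Icc (1/2:ℝ) 1, b t ≤ 0))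
    (hf₂ : ContinuousOn f₂ (Icc (1/2) 1))
    (hd1 : ∀ t ∈ Ico (1/2:ℝ) 1, HasDerivAt f₂ (f₂' t) t)
    (hd2 : ∀ t ∈ Ico (1/2:ℝ) 1, HasDerivAt f₂' (a t * f₂' t + b t) t)
    (hf₂'cont : ContinuousOn f₂' (Icc (1/2) 1))
    (hN1 : f₂' (1/2) = 0) (hN2 : f₂' 1 = 0) :
    (∀ t ∈ Icc (1/2:ℝ) 1, b t = 0) ∧ (∀ t ∈ Icc (1/2:ℝ) 1, f₂ t = f₂ (1/2)) := by
  have hpq : (1/2 : ℝ) < 1 := by norm_num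
  have hd2' : ∀ t ∈ Ioo (1/2:ℝ) 1, HasDerivAt f₂' (a t * f₂' t + b t) t :=
    fun t ht => hd2 t (Ioo_subset_Ico_self ht)
  have hv : EqOn f₂' 0 (Icc (1/2) 1) := by
    rcases hbsign with hpos | hneg
    · exact eqOn_zero_of_hasDerivAt_of_nonneg hpq ha haTop
        (fun t ht => hpos t (Ioo_subset_Icc_self ht)) hf₂'cont hd2' hN1 hN2
    · exact eqOn_zero_of_hasDerivAt_of_nonpos hpq ha haTop
        (fun t ht => hneg t (Ioo_subset_Icc_self ht)) hf₂'cont hd2' hN1 hN2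
  have hb_Ioo : EqOn b 0 (Ioo (1/2) 1) := fun t ht => by
    have hv_near : f₂' =ᶠ[𝓝 t] fun _ => 0 :=
      (hv.mono Ioo_subset_Icc_self).eventuallyEq_of_mem (Ioo_mem_nhds ht.1 ht.2)
    have h := (hd2' t ht).unique ((hasDerivAt_const t 0).congr_of_eventuallyEq hv_near)
    simpa [hv (Ioo_subset_Icc_self ht)] using h
  refine ⟨hb_Ioo.of_subset_closure hb continuousOn_const Ioo_subset_Icc_self
    (closure_Ioo hpq.ne).ge, constant_of_has_deriv_right_zero hf₂ fun t ht => ?_⟩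
  simpa [hv (Ico_subset_Icc_self ht)] using (hd1 t ht).hasDerivWithinAt
end

section
/- Let d₁≥2, ĉ₁>0, and let T₁∈C¹[½,1] satisfy T₁'≤0 on [½,1] and T₁'(t)<0 for t∈(½,1). Suppose l:[½,1]→[0,∞) is C¹, satisfies l'(t) = √(ĉ₁/d₁)·√(ĉ₁T₁(t) + (d₁−1)l(t)² − (d₁−1)) on [½,1] with the quantity under the square root nonnegative, l(½)=0, l not identically zero, and suppose there exists t*∈(½,1) with ĉ₁T₁(t*) + (d₁−1)l(t*)² − (d₁−1) = 0. Then a contradiction follows; i.e., no such interior zero t* of the expression under the square root can exist. -/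
open Set Filter Topology

/-!
At an interior zero `t*` of the radicand `F = ĉ₁ T₁ + (d₁ - 1) l² - (d₁ - 1)` the equation gives
`l'(t*) = 0`, so `F'(t*) = ĉ₁ T₁'(t*)`. But `F ≥ 0` near `t*` and `F(t*) = 0`, so `t*` is a local
minimum of `F` and `F'(t*) = 0`, contradicting `ĉ₁ > 0` and `T₁'(t*) < 0`.
-/

theorem HasDerivAt.mul_add_mul_sq_sub_of_hasDerivAt_zero {T l : ℝ → ℝ} {T' a b t : ℝ}
    (hT : HasDerivAt T T' t) (hl : HasDerivAt l 0 t) :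
    HasDerivAt (fun s => a * T s + b * l s ^ 2 - b) (a * T') t := by
  simpa using ((hT.const_mul a).add ((hl.pow 2).const_mul b)).sub_const b

theorem HasDerivAt.eq_zero_of_nonneg_of_eq_zero {F : ℝ → ℝ} {F' t : ℝ} {s : Set ℝ}
    (hF : HasDerivAt F F' t) (hs : s ∈ 𝓝 t) (hnonneg : ∀ x ∈ s, 0 ≤ F x) (hzero : F t = 0) :
    F' = 0 :=
  IsLocalMin.hasDerivAt_eq_zero (mem_of_superset hs fun x hx => hzero ▸ hnonneg x hx) hF

theorem stmt7_general (d₁ : ℕ) (chat₁ : ℝ) (hchat₁ : 0 < chat₁)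
    (T₁ T₁' l : ℝ → ℝ)
    (hT₁deriv : ∀ t ∈ Icc (1/2:ℝ) 1, HasDerivWithinAt T₁ (T₁' t) (Icc (1/2) 1) t)
    (hT₁'neg : ∀ t ∈ Ioo (1/2:ℝ) 1, T₁' t < 0)
    (hsqrtnonneg : ∀ t ∈ Icc (1/2:ℝ) 1,
      0 ≤ chat₁ * T₁ t + ((d₁:ℝ) - 1) * (l t) ^ 2 - ((d₁:ℝ) - 1))
    (hlderiv : ∀ t ∈ Icc (1/2:ℝ) 1, HasDerivWithinAt l
      (Real.sqrt (chat₁ / d₁) *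
        Real.sqrt (chat₁ * T₁ t + ((d₁:ℝ) - 1) * (l t) ^ 2 - ((d₁:ℝ) - 1)))
      (Icc (1/2) 1) t)
    (t' : ℝ) (ht' : t' ∈ Ioo (1/2:ℝ) 1)
    (hzero : chat₁ * T₁ t' + ((d₁:ℝ) - 1) * (l t') ^ 2 - ((d₁:ℝ) - 1) = 0) :
    False := by
  have hIcc : Icc (1/2:ℝ) 1 ∈ 𝓝 t' := Icc_mem_nhds ht'.1 ht'.2
  have ht'Icc : t' ∈ Icc (1/2:ℝ) 1 := Ioo_subset_Icc_self ht'
  have hl : HasDerivAt l 0 t' := by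
    simpa [hzero] using (hlderiv t' ht'Icc).hasDerivAt hIcc
  have hradicand := ((hT₁deriv t' ht'Icc).hasDerivAt hIcc).mul_add_mul_sq_sub_of_hasDerivAt_zero
    (a := chat₁) (b := (d₁:ℝ) - 1) hl
  have hcrit : chat₁ * T₁' t' = 0 :=
    hradicand.eq_zero_of_nonneg_of_eq_zero hIcc hsqrtnonneg hzero
  exact (mul_neg_of_pos_of_neg hchat₁ (hT₁'neg t' ht')).ne hcrit

/-- No interior degeneration: if l solves l' = √(chat₁/d₁)·√(chat₁T₁ + (d₁−1)l² − (d₁−1))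
with l(½) = 0, l ≥ 0 not identically zero, and T₁' < 0 on (½,1), then there is no
t* ∈ (½,1) at which the quantity under the square root vanishes. -/
theorem stmt7 (d₁ : ℕ) (hd₁ : 2 ≤ d₁) (chat₁ : ℝ) (hchat₁ : 0 < chat₁)
    (T₁ T₁' l : ℝ → ℝ)
    (hT₁deriv : ∀ t ∈ Icc (1/2:ℝ) 1, HasDerivWithinAt T₁ (T₁' t) (Icc (1/2) 1) t)
    (hT₁'cont : ContinuousOn T₁' (Icc (1/2) 1))
    (hT₁'nonpos : ∀ t ∈ Icc (1/2:ℝ) 1, T₁' t ≤ 0)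
    (hT₁'neg : ∀ t ∈ Ioo (1/2:ℝ) 1, T₁' t < 0)
    (hlnonneg : ∀ t ∈ Icc (1/2:ℝ) 1, 0 ≤ l t)
    (hsqrtnonneg : ∀ t ∈ Icc (1/2:ℝ) 1,
      0 ≤ chat₁ * T₁ t + ((d₁:ℝ) - 1) * (l t) ^ 2 - ((d₁:ℝ) - 1))
    (hlderiv : ∀ t ∈ Icc (1/2:ℝ) 1, HasDerivWithinAt l
      (Real.sqrt (chat₁ / d₁) *
        Real.sqrt (chat₁ * T₁ t + ((d₁:ℝ) - 1) * (l t) ^ 2 - ((d₁:ℝ) - 1)))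
      (Icc (1/2) 1) t)
    (hl0 : l (1/2) = 0)
    (hlnotzero : ¬ ∀ t ∈ Icc (1/2:ℝ) 1, l t = 0)
    (t' : ℝ) (ht' : t' ∈ Ioo (1/2:ℝ) 1)
    (hzero : chat₁ * T₁ t' + ((d₁:ℝ) - 1) * (l t') ^ 2 - ((d₁:ℝ) - 1) = 0) :
    False :=
  stmt7_general d₁ chat₁ hchat₁ T₁ T₁' l hT₁deriv hT₁'neg hsqrtnonneg hlderiv t' ht' hzero
end

section
/- Let S>0 and let y₂:[½,1]→ℝ be C² with y₂'(½)=0, y₂'(1)=0, and (y₂'(t))²≤S for all t. Suppose y₂ satisfies y₂''(t) = h(t)²·((α − c₂T₂(t))e^{−2y₂(t)} − y₂'(t)K(t)) on [½,1], where h>0 is continuous, K(t)≤0 is continuous, α>0 is a constant, T₂∈C¹[½,1] with T₂'≤0, and c₂∈(α/sup T₂, α/inf T₂) so that α − c₂T₂ is increasing with α − c₂T₂(½)<0 and α − c₂T₂(1)>0. Then y₂'(t)≤0 for all t∈[½,1]. -/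
/-!
With `Q = ∫ h²K`, the integrating factor `e^Q` turns the equation into
`(e^Q y₂')' = e^Q h² e^{-2y₂} (α - c₂T₂)`, whose sign is that of the increasing function
`α - c₂T₂`. Hence `e^Q y₂'` decreases from its value `0` at `½` as long as `α - c₂T₂ ≤ 0`,
and increases towards its value `0` at `1` once `α - c₂T₂ ≥ 0`; either way it stays `≤ 0`.
-/

open Set

theorem ContinuousOn.hasDerivWithinAt_intervalIntegral_Icc {f : ℝ → ℝ} {a b t : ℝ}
    (hf : ContinuousOn f (Icc a b)) (ht : t ∈ Icc a b) :
    HasDerivWithinAt (fun u => ∫ x in a..u, f x) (f t) (Icc a b) t := by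
  have := Fact.mk ht
  apply intervalIntegral.integral_hasDerivWithinAt_right
  · refine hf.mono ?_ |>.intervalIntegrable
    rw [uIcc_of_le ht.1]
    exact Icc_subset_Icc le_rfl ht.2
  · exact hf.stronglyMeasurableAtFilter_nhdsWithin measurableSet_Icc t
  · exact hf t ht

theorem hasDerivWithinAt_exp_neg_integral_mul {p u r : ℝ → ℝ} {a b t : ℝ}
    (hp : ContinuousOn p (Icc a b)) (ht : t ∈ Icc a b)
    (hu : HasDerivWithinAt u (p t * u t + r t) (Icc a b) t) :
    HasDerivWithinAt (fun s => Real.exp (-∫ x in a..s, p x) * u s)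
      (Real.exp (-∫ x in a..t, p x) * r t) (Icc a b) t := by
  have hP := (hp.hasDerivWithinAt_intervalIntegral_Icc ht).fun_neg.exp
  exact (hP.mul hu).congr_deriv (by ring)

theorem antitoneOn_of_hasDerivWithinAt_nonpos_of_convex {D : Set ℝ} (hD : Convex ℝ D)
    {f f' : ℝ → ℝ} (hf : ∀ x ∈ D, HasDerivWithinAt f (f' x) D x)
    (hf'₀ : ∀ x ∈ D, f' x ≤ 0) : AntitoneOn f D :=
  antitoneOn_of_hasDerivWithinAt_nonpos hD (fun x hx => (hf x hx).continuousWithinAt)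
    (fun x hx => (hf x (interior_subset hx)).mono interior_subset)
    (fun x hx => hf'₀ x (interior_subset hx))

theorem monotoneOn_of_hasDerivWithinAt_nonneg_of_convex {D : Set ℝ} (hD : Convex ℝ D)
    {f f' : ℝ → ℝ} (hf : ∀ x ∈ D, HasDerivWithinAt f (f' x) D x)
    (hf'₀ : ∀ x ∈ D, 0 ≤ f' x) : MonotoneOn f D :=
  monotoneOn_of_hasDerivWithinAt_nonneg hD (fun x hx => (hf x hx).continuousWithinAt)
    (fun x hx => (hf x (interior_subset hx)).mono interior_subset)
    (fun x hx => hf'₀ x (interior_subset hx))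

theorem nonpos_of_hasDerivWithinAt_nonneg_mul_monotoneOn {F w g : ℝ → ℝ} {a b : ℝ}
    (hF : ∀ t ∈ Icc a b, HasDerivWithinAt F (w t * g t) (Icc a b) t)
    (hw : ∀ t ∈ Icc a b, 0 ≤ w t) (hg : MonotoneOn g (Icc a b))
    (ha : F a ≤ 0) (hb : F b ≤ 0) : ∀ t ∈ Icc a b, F t ≤ 0 := by
  intro t ht
  rcases le_total (g t) 0 with hgt | hgt
  · have hsub : Icc a t ⊆ Icc a b := Icc_subset_Icc le_rfl ht.2
    have hanti : AntitoneOn F (Icc a t) :=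
      antitoneOn_of_hasDerivWithinAt_nonpos_of_convex (convex_Icc a t)
        (fun x hx => (hF x (hsub hx)).mono hsub)
        (fun x hx => mul_nonpos_of_nonneg_of_nonpos (hw x (hsub hx))
          ((hg (hsub hx) ht hx.2).trans hgt))
    exact (hanti (left_mem_Icc.2 ht.1) (right_mem_Icc.2 ht.1) ht.1).trans ha
  · have hsub : Icc t b ⊆ Icc a b := Icc_subset_Icc ht.1 le_rfl
    have hmono : MonotoneOn F (Icc t b) :=
      monotoneOn_of_hasDerivWithinAt_nonneg_of_convex (convex_Icc t b)
        (fun x hx => (hF x (hsub hx)).mono hsub)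
        (fun x hx => mul_nonneg (hw x (hsub hx)) (hgt.trans (hg ht (hsub hx) hx.1)))
    exact (hmono (left_mem_Icc.2 ht.2) (right_mem_Icc.2 ht.2) ht.2).trans hb

theorem stmt9_general (α c₂ : ℝ)
    (h K T₂ y₂ y₂' : ℝ → ℝ)
    (hhcont : ContinuousOn h (Icc (1/2) 1))
    (hKcont : ContinuousOn K (Icc (1/2) 1))
    (hmono : MonotoneOn (fun t => α - c₂ * T₂ t) (Icc (1/2) 1))
    (hy₂''deriv : ∀ t ∈ Icc (1/2:ℝ) 1, HasDerivWithinAt y₂'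
      ((h t) ^ 2 * ((α - c₂ * T₂ t) * Real.exp (-2 * y₂ t) - y₂' t * K t))
      (Icc (1/2) 1) t)
    (hy₂'half : y₂' (1/2) = 0) (hy₂'one : y₂' 1 = 0) :
    ∀ t ∈ Icc (1/2:ℝ) 1, y₂' t ≤ 0 := by
  set E : ℝ → ℝ := fun t => Real.exp (-∫ x in (1/2 : ℝ)..t, -(h x ^ 2 * K x))
  have hp : ContinuousOn (fun x => -(h x ^ 2 * K x)) (Icc (1/2) 1) :=
    ((hhcont.pow 2).mul hKcont).neg
  have hF : ∀ t ∈ Icc (1/2 : ℝ) 1, HasDerivWithinAt (fun s => E s * y₂' s)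
      ((E t * h t ^ 2 * Real.exp (-2 * y₂ t)) * (α - c₂ * T₂ t)) (Icc (1/2) 1) t := by
    intro t ht
    refine (hasDerivWithinAt_exp_neg_integral_mul hp ht
      (r := fun t => h t ^ 2 * ((α - c₂ * T₂ t) * Real.exp (-2 * y₂ t)))
      ((hy₂''deriv t ht).congr_deriv (by ring))).congr_deriv (by ring)
  have hEy₂' := nonpos_of_hasDerivWithinAt_nonneg_mul_monotoneOn hF
    (fun t _ => by positivity) hmono (by simp only [hy₂'half, mul_zero, le_refl])
    (by simp only [hy₂'one, mul_zero, le_refl])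
  exact fun t ht => nonpos_of_mul_nonpos_right (hEy₂' t ht) (Real.exp_pos _)

/-- Sign-preservation: if y₂'' = h²((α − c₂T₂)e^{−2y₂} − y₂'K) with h > 0, K ≤ 0,
α − c₂T₂ increasing, negative at ½ and positive at 1, y₂'(½) = y₂'(1) = 0 and
(y₂')² ≤ S, then y₂' ≤ 0 on [½,1]. -/
theorem stmt9 (S α c₂ : ℝ) (hS : 0 < S) (hα : 0 < α) (hc₂ : 0 < c₂)
    (h K T₂ T₂' y₂ y₂' : ℝ → ℝ)
    (hhcont : ContinuousOn h (Icc (1/2) 1))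
    (hhpos : ∀ t ∈ Icc (1/2:ℝ) 1, 0 < h t)
    (hKcont : ContinuousOn K (Icc (1/2) 1))
    (hKnonpos : ∀ t ∈ Icc (1/2:ℝ) 1, K t ≤ 0)
    (hT₂deriv : ∀ t ∈ Icc (1/2:ℝ) 1, HasDerivWithinAt T₂ (T₂' t) (Icc (1/2) 1) t)
    (hT₂'nonpos : ∀ t ∈ Icc (1/2:ℝ) 1, T₂' t ≤ 0)
    (hmono : MonotoneOn (fun t => α - c₂ * T₂ t) (Icc (1/2) 1))
    (hneg : α - c₂ * T₂ (1/2) < 0)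
    (hpos : 0 < α - c₂ * T₂ 1)
    (hy₂deriv : ∀ t ∈ Icc (1/2:ℝ) 1, HasDerivWithinAt y₂ (y₂' t) (Icc (1/2) 1) t)
    (hy₂''deriv : ∀ t ∈ Icc (1/2:ℝ) 1, HasDerivWithinAt y₂'
      ((h t) ^ 2 * ((α - c₂ * T₂ t) * Real.exp (-2 * y₂ t) - y₂' t * K t))
      (Icc (1/2) 1) t)
    (hy₂'half : y₂' (1/2) = 0) (hy₂'one : y₂' 1 = 0)
    (hbound : ∀ t ∈ Icc (1/2:ℝ) 1, (y₂' t) ^ 2 ≤ S) :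
    ∀ t ∈ Icc (1/2:ℝ) 1, y₂' t ≤ 0 :=
  stmt9_general α c₂ h K T₂ y₂ y₂' hhcont hKcont hmono hy₂''deriv hy₂'half hy₂'one
end

section
/- Let ε>0 and suppose z₁:[1−ε,1)→ℝ is C¹, satisfies z₁ ≥ 0, and satisfies z₁'(t) = (z₁(t)/(1−t))·((z₁(t)−1) + h₀(t) + d₁z₁(t)(z₁(t)−1) + h₁(t)z₁(t) + h₂(t)z₁(t)²) on [1−ε,1), where d₁≥2 and h₀,h₁,h₂ are continuous on [1−ε,1] with h₀(1)=h₁(1)=h₂(1)=0. If z₁ exists on all of [1−ε,1) and does not tend to 0 as t→1, then lim_{t→1⁻} z₁(t) = 1. -/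
open Set Filter

lemma slope_right (f : ℝ → ℝ) (d u : ℝ) (hd : HasDerivAt f d u) (hpos : 0 < d) :
    ∀ᶠ t in nhdsWithin u (Ioi u), f u < f t := by
  have h := hasDerivAt_iff_tendsto_slope.mp hd
  have h2 : ∀ᶠ t in nhdsWithin u {u}ᶜ, 0 < slope f u t :=
    h.eventually (eventually_gt_nhds hpos)
  have h3 : ∀ᶠ t in nhdsWithin u (Ioi u), 0 < slope f u t :=
    h2.filter_mono (nhdsWithin_mono u (fun x hx => ne_of_gt hx))
  filter_upwards [h3, self_mem_nhdsWithin] with t ht htu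
  have hpos' : 0 < t - u := sub_pos.2 htu
  rw [slope_def_field] at ht
  have := mul_pos ht hpos'
  rw [div_mul_cancel₀] at this
  · linarith
  · exact ne_of_gt hpos'

lemma barrier_ge (f f' : ℝ → ℝ) (a b K : ℝ)
    (hd : ∀ t ∈ Ico a b, HasDerivAt f (f' t) t)
    (hpos : ∀ t ∈ Ico a b, f t = K → 0 < f' t)
    (ha : K ≤ f a) :
    ∀ t ∈ Ico a b, K ≤ f t := by
  by_contra h
  push_neg at h
  obtain ⟨s, hs, hfs⟩ := h
  have has : a < s := by
    rcases lt_or_eq_of_le hs.1 with h | h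
    · exact h
    · exfalso; rw [← h] at hfs; linarith
  have hcont : ContinuousOn f (Icc a s) := fun t ht =>
    ((hd t ⟨ht.1, lt_of_le_of_lt ht.2 hs.2⟩).continuousAt).continuousWithinAt
  set T := Icc a s ∩ f ⁻¹' (Ici K) with hT
  have hTclosed : IsClosed T :=
    hcont.preimage_isClosed_of_isClosed isClosed_Icc isClosed_Ici
  have haT : a ∈ T := ⟨⟨le_refl a, has.le⟩, ha⟩
  have hTb : BddAbove T := (bddAbove_Icc).mono (inter_subset_left)
  set u := sSup T with hu
  have huT : u ∈ T := hTclosed.csSup_mem ⟨a, haT⟩ hTb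
  have hau : a ≤ u := le_csSup hTb haT
  have hus : u ≤ s := csSup_le ⟨a, haT⟩ (fun x hx => hx.1.2)
  have hfu : K ≤ f u := huT.2
  have hune : u < s := lt_of_le_of_ne hus (fun h => by rw [h] at hfu; linarith)
  have hcross : ∀ t ∈ Ioc u s, f t < K := by
    intro t ht
    by_contra hc
    push_neg at hc
    have : t ∈ T := ⟨⟨le_trans hau ht.1.le, ht.2⟩, hc⟩
    have := le_csSup hTb this
    linarith [ht.1]
  have hIoo : Ioo u s ∈ nhdsWithin u (Ioi u) := Ioo_mem_nhdsGT_of_mem ⟨le_refl u, hune⟩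
  rcases eq_or_lt_of_le hfu with heq | hlt
  · have hub : u ∈ Ico a b := ⟨hau, lt_of_le_of_lt hus hs.2⟩
    have hd' := hpos u hub heq.symm
    have := slope_right f (f' u) u (hd u hub) hd'
    have hIoo' : ∀ᶠ t in nhdsWithin u (Ioi u), t ∈ Ioo u s := hIoo
    obtain ⟨t, ht1, ht2⟩ := (this.and hIoo').exists
    have := hcross t ⟨ht2.1, ht2.2.le⟩
    rw [heq] at this
    linarith
  · have hub : u ∈ Ico a b := ⟨hau, lt_of_le_of_lt hus hs.2⟩
    have hc : ContinuousAt f u := (hd u hub).continuousAt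
    have : ∀ᶠ t in nhdsWithin u (Ioi u), K < f t :=
      (hc.eventually (eventually_gt_nhds hlt)).filter_mono nhdsWithin_le_nhds
    have hIoo' : ∀ᶠ t in nhdsWithin u (Ioi u), t ∈ Ioo u s := hIoo
    obtain ⟨t, ht1, ht2⟩ := (this.and hIoo').exists
    have := hcross t ⟨ht2.1, ht2.2.le⟩
    linarith

lemma barrier_le (f f' : ℝ → ℝ) (a b K : ℝ)
    (hd : ∀ t ∈ Ico a b, HasDerivAt f (f' t) t)
    (hneg : ∀ t ∈ Ico a b, f t = K → f' t < 0)
    (ha : f a ≤ K) :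
    ∀ t ∈ Ico a b, f t ≤ K := by
  have := barrier_ge (fun t => -f t) (fun t => -f' t) a b (-K)
    (fun t ht => (hd t ht).neg)
    (fun t ht hft => by
      have hft' : -f t = -K := hft
      have : f t = K := by linarith
      simpa using hneg t ht this)
    (by simpa using neg_le_neg ha)
  intro t ht
  have h2 : -K ≤ -f t := this t ht
  linarith

lemma antitone_aux (f f' : ℝ → ℝ) (a b : ℝ)
    (hd : ∀ t ∈ Ico a b, HasDerivAt f (f' t) t)
    (hneg : ∀ t ∈ Ico a b, f' t ≤ 0) :
    AntitoneOn f (Ico a b) := by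
  intro x hx y hy hxy
  have hsub : Icc x y ⊆ Ico a b := fun t ht => ⟨le_trans hx.1 ht.1, lt_of_le_of_lt ht.2 hy.2⟩
  have hcont : ContinuousOn f (Icc x y) := fun t ht => ((hd t (hsub ht)).continuousAt).continuousWithinAt
  have hdiff : DifferentiableOn ℝ f (interior (Icc x y)) := fun t ht =>
    ((hd t (hsub (interior_subset ht))).differentiableAt).differentiableWithinAt
  have := antitoneOn_of_deriv_nonpos (convex_Icc x y) hcont hdiff (fun t ht => by
    rw [(hd t (hsub (interior_subset ht))).deriv]
    exact hneg t (hsub (interior_subset ht)))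
  exact this ⟨le_refl x, hxy⟩ ⟨hxy, le_refl y⟩ hxy

lemma decay (g g' : ℝ → ℝ) (a c : ℝ) (hc : 0 < c) (ha : a < 1)
    (hd : ∀ t ∈ Ico a (1:ℝ), HasDerivAt g (g' t) t)
    (hineq : ∀ t ∈ Ico a (1:ℝ), g' t ≤ -c / (1 - t)) :
    ∀ M : ℝ, ∃ t ∈ Ico a (1:ℝ), g t < M := by
  intro M
  set H := fun t => g t - c * Real.log (1 - t) with hH
  have hHd : ∀ t ∈ Ico a (1:ℝ), HasDerivAt H (g' t + c / (1 - t)) t := by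
    intro t ht
    have h1t : (0:ℝ) < 1 - t := by linarith [ht.2]
    have h1 : HasDerivAt (fun s : ℝ => 1 - s) (-1) t := by
      simpa using (hasDerivAt_id t).const_sub 1
    have h2 := h1.log (ne_of_gt h1t)
    have h3 := h2.const_mul c
    have h4 := (hd t ht).sub h3
    rw [show g' t + c / (1 - t) = g' t - c * (-1 / (1 - t)) by ring]
    exact h4
  have hanti : AntitoneOn H (Ico a 1) := antitone_aux H (fun t => g' t + c / (1 - t)) a 1 hHd
    (fun t ht => by
      have := hineq t ht
      have h1t : (0:ℝ) < 1 - t := by linarith [ht.2]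
      have hng : -c / (1 - t) + c / (1 - t) = 0 := by ring
      show g' t + c / (1 - t) ≤ 0
      linarith)
  set t₂ := (max a (1 - Real.exp ((M - H a) / c)) + 1) / 2 with ht₂
  have hmax : max a (1 - Real.exp ((M - H a) / c)) < 1 := by
    rcases max_cases a (1 - Real.exp ((M - H a) / c)) with ⟨h, _⟩ | ⟨h, _⟩ <;> rw [h]
    · exact ha
    · have := Real.exp_pos ((M - H a) / c); linarith
  have ht₂1 : t₂ < 1 := by rw [ht₂]; linarith
  have ht₂a : a ≤ t₂ := by
    have := le_max_left a (1 - Real.exp ((M - H a) / c)); rw [ht₂]; linarith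
  have ht₂e : 1 - Real.exp ((M - H a) / c) < t₂ := by
    have := le_max_right a (1 - Real.exp ((M - H a) / c)); rw [ht₂]; linarith
  refine ⟨t₂, ⟨ht₂a, ht₂1⟩, ?_⟩
  have hHle : H t₂ ≤ H a := hanti ⟨le_refl a, ha⟩ ⟨ht₂a, ht₂1⟩ ht₂a
  have hlog : Real.log (1 - t₂) < (M - H a) / c := by
    have h1 : (0:ℝ) < 1 - t₂ := by linarith
    have h2 : 1 - t₂ < Real.exp ((M - H a) / c) := by linarith
    calc Real.log (1 - t₂) < Real.log (Real.exp ((M - H a) / c)) :=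
          Real.log_lt_log h1 h2
      _ = (M - H a) / c := Real.log_exp _
  have : c * Real.log (1 - t₂) < M - H a := by
    have h := mul_lt_mul_of_pos_left hlog hc
    rw [mul_div_cancel₀ _ (ne_of_gt hc)] at h
    exact h
  have : g t₂ = H t₂ + c * Real.log (1 - t₂) := by rw [hH]; ring
  linarith [hHle]

set_option maxHeartbeats 1000000 in
/-- Stability analysis near t = 1: if z₁ ≥ 0 solves the singular ODE
z₁' = (z₁/(1−t))·((z₁−1) + h₀ + d₁z₁(z₁−1) + h₁z₁ + h₂z₁²) on [1−ε,1), where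
h₀,h₁,h₂ are continuous and vanish at 1, and z₁ does not tend to 0 at 1, then
z₁ → 1 as t → 1⁻. -/
theorem stmt14 (ε : ℝ) (hε : 0 < ε) (hε1 : ε < 1) (d₁ : ℕ) (hd₁ : 2 ≤ d₁)
    (h₀ h₁ h₂ z₁ : ℝ → ℝ)
    (hh₀ : ContinuousOn h₀ (Icc (1 - ε) 1)) (hh₀1 : h₀ 1 = 0)
    (hh₁ : ContinuousOn h₁ (Icc (1 - ε) 1)) (hh₁1 : h₁ 1 = 0)
    (hh₂ : ContinuousOn h₂ (Icc (1 - ε) 1)) (hh₂1 : h₂ 1 = 0)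
    (hz₁nonneg : ∀ t ∈ Ico (1 - ε) (1:ℝ), 0 ≤ z₁ t)
    (hode : ∀ t ∈ Ico (1 - ε) (1:ℝ), HasDerivAt z₁
      ((z₁ t / (1 - t)) * ((z₁ t - 1) + h₀ t + (d₁:ℝ) * z₁ t * (z₁ t - 1) +
        h₁ t * z₁ t + h₂ t * (z₁ t) ^ 2)) t)
    (hnot0 : ¬ Tendsto z₁ (nhdsWithin 1 (Iio 1)) (nhds 0)) :
    Tendsto z₁ (nhdsWithin 1 (Iio 1)) (nhds 1) := by
  set F : ℝ → ℝ := fun t => (z₁ t - 1) + h₀ t + (d₁:ℝ) * z₁ t * (z₁ t - 1) +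
      h₁ t * z₁ t + h₂ t * (z₁ t) ^ 2 with hFdef
  set R : ℝ → ℝ := fun t => (z₁ t / (1 - t)) * F t with hRdef
  have hodeR : ∀ t ∈ Ico (1 - ε) (1:ℝ), HasDerivAt z₁ (R t) t := fun t ht => hode t ht
  have hdcast : (2:ℝ) ≤ (d₁:ℝ) := by exact_mod_cast hd₁
  have key : ∀ e : ℝ, 0 < e → e ≤ 1/2 →
      ∃ t₁ : ℝ, (1 - ε ≤ t₁ ∧ t₁ < 1) ∧ ∀ t ∈ Ico t₁ (1:ℝ), |z₁ t - 1| < e := by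
    intro e he he2
    -- bounds on the h's near 1
    have h1mem : (1:ℝ) ∈ Icc (1 - ε) 1 := right_mem_Icc.2 (by linarith)
    have h0t : Tendsto h₀ (nhdsWithin 1 (Icc (1 - ε) 1)) (nhds 0) := hh₀1 ▸ hh₀ 1 h1mem
    have h1t : Tendsto h₁ (nhdsWithin 1 (Icc (1 - ε) 1)) (nhds 0) := hh₁1 ▸ hh₁ 1 h1mem
    have h2t : Tendsto h₂ (nhdsWithin 1 (Icc (1 - ε) 1)) (nhds 0) := hh₂1 ▸ hh₂ 1 h1mem
    obtain ⟨δ₀, hδ₀, hb₀⟩ := Metric.tendsto_nhdsWithin_nhds.mp h0t (e/6) (by positivity)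
    obtain ⟨δ₁', hδ₁, hb₁⟩ := Metric.tendsto_nhdsWithin_nhds.mp h1t (e/6) (by positivity)
    obtain ⟨δ₂, hδ₂, hb₂⟩ := Metric.tendsto_nhdsWithin_nhds.mp h2t (e/6) (by positivity)
    set δ := min δ₀ (min δ₁' δ₂) with hδdef
    have hδpos : 0 < δ := lt_min hδ₀ (lt_min hδ₁ hδ₂)
    set t₁ := max (1 - ε) (1 - δ/2) with ht₁def
    have ht₁ε : 1 - ε ≤ t₁ := le_max_left _ _
    have ht₁1 : t₁ < 1 := by
      rcases max_cases (1 - ε) (1 - δ/2) with ⟨h, _⟩ | ⟨h, _⟩ <;> rw [ht₁def, h] <;> linarith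
    have ht₁δ : 1 - δ/2 ≤ t₁ := le_max_right _ _
    have hbound : ∀ t ∈ Ico t₁ (1:ℝ), |h₀ t| ≤ e/6 ∧ |h₁ t| ≤ e/6 ∧ |h₂ t| ≤ e/6 := by
      intro t ht
      have htm : t ∈ Icc (1 - ε) 1 := ⟨le_trans ht₁ε ht.1, ht.2.le⟩
      have hdist : dist t 1 < δ := by
        rw [Real.dist_eq, abs_of_nonpos (by linarith [ht.2])]
        have := ht.1
        linarith
      have d0 : dist t 1 < δ₀ := lt_of_lt_of_le hdist (min_le_left _ _)
      have d1 : dist t 1 < δ₁' := lt_of_lt_of_le hdist (le_trans (min_le_right _ _) (min_le_left _ _))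
      have d2 : dist t 1 < δ₂ := lt_of_lt_of_le hdist (le_trans (min_le_right _ _) (min_le_right _ _))
      have e0 := hb₀ htm d0
      have e1 := hb₁ htm d1
      have e2 := hb₂ htm d2
      rw [Real.dist_eq, sub_zero] at e0 e1 e2
      exact ⟨e0.le, e1.le, e2.le⟩
    -- sign lemmas for F
    have hFpos : ∀ t ∈ Ico t₁ (1:ℝ), 1 + e ≤ z₁ t → e/2 * (z₁ t)^2 ≤ F t := by
      intro t ht hz
      obtain ⟨b0, b1, b2⟩ := hbound t ht
      have b0' := abs_le.mp b0
      have b1' := abs_le.mp b1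
      have b2' := abs_le.mp b2
      have hw1 : 1 ≤ z₁ t := by linarith
      simp only [hFdef]
      nlinarith [mul_le_mul_of_nonneg_left b1'.1 (by linarith : (0:ℝ) ≤ z₁ t),
        mul_le_mul_of_nonneg_left b2'.1 (by positivity : (0:ℝ) ≤ (z₁ t)^2),
        mul_le_mul_of_nonneg_left hz (by linarith : (0:ℝ) ≤ z₁ t),
        mul_nonneg (by linarith : (0:ℝ) ≤ z₁ t - 1)
          (mul_nonneg (by linarith) (by linarith : (0:ℝ) ≤ z₁ t) : (0:ℝ) ≤ ((d₁:ℝ)-2) * z₁ t),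
        sq_nonneg (z₁ t - 1),
        mul_pos (lt_of_lt_of_le (by linarith) hz : (0:ℝ) < z₁ t)
          (lt_of_lt_of_le (by linarith) hz : (0:ℝ) < z₁ t)]
    have hFneg : ∀ t ∈ Ico t₁ (1:ℝ), 0 ≤ z₁ t → z₁ t ≤ 1 - e → F t ≤ -(e/2) := by
      intro t ht hw0 hw
      obtain ⟨b0, b1, b2⟩ := hbound t ht
      have b0' := abs_le.mp b0
      have b1' := abs_le.mp b1
      have b2' := abs_le.mp b2
      have hw1 : z₁ t ≤ 1 := by linarith
      simp only [hFdef]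
      nlinarith [mul_le_mul_of_nonneg_left b1'.2 hw0,
        mul_le_mul_of_nonneg_left b2'.2 (by positivity : (0:ℝ) ≤ (z₁ t)^2),
        mul_nonneg (mul_nonneg (by linarith : (0:ℝ) ≤ (d₁:ℝ)) hw0)
          (by linarith : (0:ℝ) ≤ 1 - z₁ t),
        mul_le_one₀ hw1 hw0 hw1]
    -- Part A: z₁ stays below 1 + e
    have hA : ∀ t ∈ Ico t₁ (1:ℝ), z₁ t < 1 + e := by
      by_contra hcA
      push_neg at hcA
      obtain ⟨t₀, ht₀, h1e⟩ := hcA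
      have hsub : Ico t₀ (1:ℝ) ⊆ Ico (1 - ε) 1 :=
        fun t ht => ⟨le_trans ht₁ε (le_trans ht₀.1 ht.1), ht.2⟩
      have hsub₁ : Ico t₀ (1:ℝ) ⊆ Ico t₁ 1 := fun t ht => ⟨le_trans ht₀.1 ht.1, ht.2⟩
      have hdloc : ∀ t ∈ Ico t₀ (1:ℝ), HasDerivAt z₁ (R t) t := fun t ht => hodeR t (hsub ht)
      have hinv : ∀ t ∈ Ico t₀ (1:ℝ), 1 + e ≤ z₁ t := by
        refine barrier_ge z₁ R t₀ 1 (1 + e) hdloc ?_ h1e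
        intro t ht hzt
        have hF := hFpos t (hsub₁ ht) (le_of_eq hzt.symm)
        have h1t : (0:ℝ) < 1 - t := by linarith [ht.2]
        have hz : (0:ℝ) < z₁ t := by rw [hzt]; linarith
        have hFt : (0:ℝ) < F t := lt_of_lt_of_le (by positivity) hF
        exact mul_pos (div_pos hz h1t) hFt
      have hzpos : ∀ t ∈ Ico t₀ (1:ℝ), 0 < z₁ t :=
        fun t ht => lt_of_lt_of_le (by linarith) (hinv t ht)
      have hdinv : ∀ t ∈ Ico t₀ (1:ℝ),
          HasDerivAt (fun s => (z₁ s)⁻¹) (-(R t) / (z₁ t)^2) t :=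
        fun t ht => (hdloc t ht).inv (ne_of_gt (hzpos t ht))
      have hineq : ∀ t ∈ Ico t₀ (1:ℝ), -(R t) / (z₁ t)^2 ≤ -(e/2) / (1 - t) := by
        intro t ht
        have h1t : (0:ℝ) < 1 - t := by linarith [ht.2]
        have hz := hinv t ht
        have hz0 := hzpos t ht
        have hF := hFpos t (hsub₁ ht) hz
        rw [div_le_div_iff₀ (by positivity) h1t]
        have hRt : R t * (1 - t) = z₁ t * F t := by
          simp only [hRdef]
          field_simp
        have hcube : e/2 * (z₁ t)^2 ≤ z₁ t * F t := by
          nlinarith [mul_le_mul_of_nonneg_left hF hz0.le,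
            mul_nonneg (sq_nonneg (z₁ t)) (by linarith : (0:ℝ) ≤ z₁ t - 1)]
        calc -R t * (1 - t) = -(z₁ t * F t) := by linear_combination (-1 : ℝ) * hRt
          _ ≤ -(e/2) * (z₁ t)^2 := by linarith
      obtain ⟨t₂, ht₂, hneg⟩ := decay (fun s => (z₁ s)⁻¹) (fun t => -(R t) / (z₁ t)^2)
        t₀ (e/2) (by positivity) ht₀.2 hdinv hineq 0
      have := inv_pos.2 (hzpos t₂ ht₂)
      linarith
    -- Part B: z₁ stays above 1 - e
    have hB : ∀ t ∈ Ico t₁ (1:ℝ), 1 - e < z₁ t := by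
      by_contra hcB
      push_neg at hcB
      obtain ⟨t₀, ht₀, hle⟩ := hcB
      have hsub : Ico t₀ (1:ℝ) ⊆ Ico (1 - ε) 1 :=
        fun t ht => ⟨le_trans ht₁ε (le_trans ht₀.1 ht.1), ht.2⟩
      have hsub₁ : Ico t₀ (1:ℝ) ⊆ Ico t₁ 1 := fun t ht => ⟨le_trans ht₀.1 ht.1, ht.2⟩
      have hdloc : ∀ t ∈ Ico t₀ (1:ℝ), HasDerivAt z₁ (R t) t := fun t ht => hodeR t (hsub ht)
      have hub : ∀ t ∈ Ico t₀ (1:ℝ), z₁ t ≤ 1 - e := by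
        refine barrier_le z₁ R t₀ 1 (1 - e) hdloc ?_ hle
        intro t ht hzt
        have hF := hFneg t (hsub₁ ht) (hz₁nonneg t (hsub ht)) (le_of_eq hzt)
        have h1t : (0:ℝ) < 1 - t := by linarith [ht.2]
        have hz : (0:ℝ) < z₁ t := by rw [hzt]; linarith
        have hFt : F t < 0 := lt_of_le_of_lt hF (by linarith)
        exact mul_neg_of_pos_of_neg (div_pos hz h1t) hFt
      have hRnp : ∀ t ∈ Ico t₀ (1:ℝ), R t ≤ 0 := by
        intro t ht
        have hF := hFneg t (hsub₁ ht) (hz₁nonneg t (hsub ht)) (hub t ht)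
        have h1t : (0:ℝ) < 1 - t := by linarith [ht.2]
        have h1 : (0:ℝ) ≤ z₁ t / (1 - t) := div_nonneg (hz₁nonneg t (hsub ht)) h1t.le
        have h2 : F t ≤ 0 := le_trans hF (by linarith)
        exact mul_nonpos_iff.2 (Or.inl ⟨h1, h2⟩)
      have hanti : AntitoneOn z₁ (Ico t₀ 1) := antitone_aux z₁ R t₀ 1 hdloc hRnp
      have hsmall : ∀ L : ℝ, 0 < L → ∃ s ∈ Ico t₀ (1:ℝ), z₁ s < L := by
        intro L hL
        by_contra hns
        push_neg at hns
        have hzpos : ∀ t ∈ Ico t₀ (1:ℝ), 0 < z₁ t :=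
          fun t ht => lt_of_lt_of_le hL (hns t ht)
        have hdlog : ∀ t ∈ Ico t₀ (1:ℝ),
            HasDerivAt (fun s => Real.log (z₁ s)) (R t / z₁ t) t :=
          fun t ht => (hdloc t ht).log (ne_of_gt (hzpos t ht))
        have hineq2 : ∀ t ∈ Ico t₀ (1:ℝ), R t / z₁ t ≤ -(e/2) / (1 - t) := by
          intro t ht
          have h1t : (0:ℝ) < 1 - t := by linarith [ht.2]
          have hz := hzpos t ht
          have hF := hFneg t (hsub₁ ht) (hz₁nonneg t (hsub ht)) (hub t ht)
          have heq : R t / z₁ t = F t / (1 - t) := by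
            simp only [hRdef]
            field_simp
          rw [heq]
          gcongr
        obtain ⟨s, hsm, hlog⟩ := decay (fun s => Real.log (z₁ s)) (fun t => R t / z₁ t)
          t₀ (e/2) (by positivity) ht₀.2 hdlog hineq2 (Real.log L)
        have hlb : Real.log L ≤ Real.log (z₁ s) :=
          Real.log_le_log hL (hns s hsm)
        linarith
      have h0 : Tendsto z₁ (nhdsWithin 1 (Iio 1)) (nhds 0) := by
        rw [Metric.tendsto_nhdsWithin_nhds]
        intro ε' hε'
        obtain ⟨s, hsm, hzs⟩ := hsmall ε' hε'
        refine ⟨1 - s, by linarith [hsm.2], ?_⟩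
        intro t htIio hdist
        have ht1 : t < 1 := htIio
        rw [Real.dist_eq, abs_of_nonpos (by linarith)] at hdist
        have hst : s ≤ t := by linarith
        have htm : t ∈ Ico t₀ (1:ℝ) := ⟨le_trans hsm.1 hst, ht1⟩
        have hmono := hanti hsm htm hst
        have h2 : 0 ≤ z₁ t := hz₁nonneg t (hsub htm)
        rw [Real.dist_eq, sub_zero, abs_of_nonneg h2]
        linarith
      exact hnot0 h0
    exact ⟨t₁, ⟨ht₁ε, ht₁1⟩, fun t ht =>
      abs_lt.2 ⟨by linarith [hB t ht], by linarith [hA t ht]⟩⟩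
  rw [Metric.tendsto_nhdsWithin_nhds]
  intro ε' hε'
  obtain ⟨t₁, ⟨ht₁ε, ht₁1⟩, hbd⟩ := key (min ε' (1/2)) (lt_min hε' (by norm_num))
    (min_le_right _ _)
  refine ⟨1 - t₁, by linarith, ?_⟩
  intro t htIio hdist
  have ht1 : t < 1 := htIio
  rw [Real.dist_eq, abs_of_nonpos (by linarith)] at hdist
  have htm : t ∈ Ico t₁ (1:ℝ) := ⟨by linarith, ht1⟩
  have := hbd t htm
  rw [Real.dist_eq]
  exact lt_of_lt_of_le this (min_le_left _ _)
end

section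
/- Let d₁,d₂ ≥ 2 be integers and c₁>0. Suppose y₁,y₂:[½,1]→ℝ are C² and satisfy d₁y₁''(t) + d₂y₂''(t) = −(d₁(y₁'(t))² + d₂(y₂'(t))²) + (h'(t)/h(t))·(d₁y₁'(t)+d₂y₂'(t)) − c₁ on (½,1], where h>0 is C¹, and y₁'(½)=y₂'(½)=0. Then d₁y₁'(t) + d₂y₂'(t) < 0 for all t∈(½,1]. -/
open Set

/-- If d₁y₁'' + d₂y₂'' = −(d₁(y₁')² + d₂(y₂')²) + (h'/h)(d₁y₁' + d₂y₂') − c₁ on (½,1]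
with h > 0 and y₁'(½) = y₂'(½) = 0, then d₁y₁' + d₂y₂' < 0 on (½,1]. -/
theorem stmt17 (d₁ d₂ : ℕ) (hd₁ : 2 ≤ d₁) (hd₂ : 2 ≤ d₂) (c₁ : ℝ) (hc₁ : 0 < c₁)
    (h h' y₁ y₂ y₁' y₂' y₁'' y₂'' : ℝ → ℝ)
    (hhpos : ∀ t ∈ Icc (1/2:ℝ) 1, 0 < h t)
    (hhderiv : ∀ t ∈ Icc (1/2:ℝ) 1, HasDerivWithinAt h (h' t) (Icc (1/2) 1) t)
    (hh'cont : ContinuousOn h' (Icc (1/2) 1))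
    (hy₁deriv : ∀ t ∈ Icc (1/2:ℝ) 1, HasDerivWithinAt y₁ (y₁' t) (Icc (1/2) 1) t)
    (hy₂deriv : ∀ t ∈ Icc (1/2:ℝ) 1, HasDerivWithinAt y₂ (y₂' t) (Icc (1/2) 1) t)
    (hy₁''deriv : ∀ t ∈ Icc (1/2:ℝ) 1, HasDerivWithinAt y₁' (y₁'' t) (Icc (1/2) 1) t)
    (hy₂''deriv : ∀ t ∈ Icc (1/2:ℝ) 1, HasDerivWithinAt y₂' (y₂'' t) (Icc (1/2) 1) t)
    (hy₁''cont : ContinuousOn y₁'' (Icc (1/2) 1))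
    (hy₂''cont : ContinuousOn y₂'' (Icc (1/2) 1))
    (heq : ∀ t ∈ Ioc (1/2:ℝ) 1,
      (d₁:ℝ) * y₁'' t + (d₂:ℝ) * y₂'' t =
        -((d₁:ℝ) * (y₁' t) ^ 2 + (d₂:ℝ) * (y₂' t) ^ 2) +
          (h' t / h t) * ((d₁:ℝ) * y₁' t + (d₂:ℝ) * y₂' t) - c₁)
    (hinit₁ : y₁' (1/2) = 0) (hinit₂ : y₂' (1/2) = 0) :
    ∀ t ∈ Ioc (1/2:ℝ) 1, (d₁:ℝ) * y₁' t + (d₂:ℝ) * y₂' t < 0 := by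
  set w : ℝ → ℝ := fun t => (d₁:ℝ) * y₁' t + (d₂:ℝ) * y₂' t with hwdef
  set W : ℝ → ℝ := fun t => (d₁:ℝ) * y₁'' t + (d₂:ℝ) * y₂'' t with hWdef
  have hwderiv : ∀ t ∈ Icc (1/2:ℝ) 1, HasDerivWithinAt w (W t) (Icc (1/2) 1) t := fun t ht =>
    ((hy₁''deriv t ht).const_mul _).add ((hy₂''deriv t ht).const_mul _)
  set g : ℝ → ℝ := fun t => w t / h t with hgdef
  have hgderiv : ∀ t ∈ Icc (1/2:ℝ) 1,
      HasDerivWithinAt g ((W t * h t - w t * h' t) / (h t)^2) (Icc (1/2) 1) t := fun t ht =>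
    (hwderiv t ht).div (hhderiv t ht) (ne_of_gt (hhpos t ht))
  have hcont : ContinuousOn g (Icc (1/2) 1) := fun t ht => (hgderiv t ht).continuousWithinAt
  have hanti : StrictAntiOn g (Icc (1/2) 1) := by
    apply strictAntiOn_of_deriv_neg (convex_Icc _ _) hcont
    intro x hx
    rw [interior_Icc] at hx
    have hxIcc : x ∈ Icc (1/2:ℝ) 1 := Ioo_subset_Icc_self hx
    have hxIoc : x ∈ Ioc (1/2:ℝ) 1 := ⟨hx.1, le_of_lt hx.2⟩
    have hD : HasDerivAt g ((W x * h x - w x * h' x) / (h x)^2) x :=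
      (hgderiv x hxIcc).hasDerivAt (Icc_mem_nhds hx.1 hx.2)
    rw [hD.deriv]
    have hpos := hhpos x hxIcc
    have hWx : W x = -((d₁:ℝ) * (y₁' x) ^ 2 + (d₂:ℝ) * (y₂' x) ^ 2)
        + (h' x / h x) * w x - c₁ := heq x hxIoc
    have hsq : 0 ≤ (d₁:ℝ) * (y₁' x) ^ 2 + (d₂:ℝ) * (y₂' x) ^ 2 := by positivity
    have hN : W x * h x - w x * h' x
        = -(((d₁:ℝ) * (y₁' x) ^ 2 + (d₂:ℝ) * (y₂' x) ^ 2) + c₁) * h x := by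
      rw [hWx]; field_simp; ring
    rw [hN]
    apply div_neg_of_neg_of_pos _ (by positivity)
    apply mul_neg_of_neg_of_pos _ hpos
    linarith
  intro t ht
  have htIcc : t ∈ Icc (1/2:ℝ) 1 := ⟨le_of_lt ht.1, ht.2⟩
  have h0 : (1/2:ℝ) ∈ Icc (1/2:ℝ) 1 := ⟨le_refl _, by norm_num⟩
  have hlt := hanti h0 htIcc ht.1
  have hw0 : w (1/2) = 0 := by simp only [hwdef]; rw [hinit₁, hinit₂]; ring
  have hg0 : g (1/2) = 0 := by simp only [hgdef]; rw [hw0, zero_div]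
  rw [hg0] at hlt
  have hp := hhpos t htIcc
  rcases div_neg_iff.mp hlt with ⟨_, hneg⟩ | ⟨hneg, _⟩
  · linarith
  · exact hneg
end
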